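/- arXiv:0910.4515 — 7 statements merged into one kernel-verified Lean document; each statement's English description precedes it below -/
import Mathlib

section
/- The matrices A_D, for D ranging over P(n,p), form a basis of 𝒜 as a complex vector space; in particular, the dimension of 𝒜 over ℂ equals the binomial coefficient C(n + p² − 1, p² − 1). -/
/-!
A pair of words `(a, b)` is a single word `k ↦ (a k, b k)` over the alphabet `[p]²`, and `D(a, b)`
is its Parikh vector (the number of occurrences of each letter). Two words have the same Parikh
vector iff they differ by a permutation of positions, and every vector of total weight `n` is the
Parikh vector of a word of length `n`. Hence `𝒜` consists exactly of the matrices whose entry at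
`(a, b)` is a function of `D(a, b)`, so `𝒜 ≅ ℂ^{P(n,p)}` with `A_D` the image of the standard basis.
Finally `P(n,p)` is in bijection with the multisets of size `n` on `p²` letters, which stars and
bars counts.
-/

open scoped Classical

noncomputable section

/-- `D(a,b) ∈ ℕ^{p×p}`: `D(a,b)_{i,j}` counts positions `k` with `a_k = i` and `b_k = j`. -/
def Dmat {n p : ℕ} (a b : Fin n → Fin p) : Matrix (Fin p) (Fin p) ℕ :=
  Matrix.of fun i j => (Finset.univ.filter fun k => a k = i ∧ b k = j).card

/-- The 0/1 matrix `A_D` with `(A_D)_{a,b} = 1` iff `D(a,b) = D`. -/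
def AD (n p : ℕ) (D : Matrix (Fin p) (Fin p) ℕ) :
    Matrix (Fin n → Fin p) (Fin n → Fin p) ℂ :=
  Matrix.of fun a b => if Dmat a b = D then 1 else 0

/-- The algebra `𝒜` of `S_n`-invariant matrices, as a complex subspace of the matrix space:
`M_{σa, σb} = M_{a,b}` for all `σ ∈ S_n` (here `(σa)_i = a_{σ⁻¹ i}`). -/
def invAlg (n p : ℕ) : Submodule ℂ (Matrix (Fin n → Fin p) (Fin n → Fin p) ℂ) where
  carrier := {M | ∀ σ : Equiv.Perm (Fin n), ∀ a b : Fin n → Fin p,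
    M (fun i => a (σ⁻¹ i)) (fun i => b (σ⁻¹ i)) = M a b}
  add_mem' := by
    intro x y hx hy σ a b
    simp only [Matrix.add_apply, hx σ a b, hy σ a b]
  zero_mem' := by
    intro σ a b
    rfl
  smul_mem' := by
    intro c x hx σ a b
    simp only [Matrix.smul_apply, hx σ a b]

open Finset

section Parikh

variable {ι α : Type*} [Fintype ι]

def parikh (c : ι → α) (y : α) : ℕ := #{k | c k = y}

lemma sum_parikh [Fintype α] (c : ι → α) : ∑ y, parikh c y = Fintype.card ι := by
  rw [← card_univ, card_eq_sum_card_fiberwise (f := c) (t := univ) fun _ _ => mem_univ _]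
  rfl

lemma parikh_comp_equiv {κ : Type*} [Fintype κ] (c : ι → α) (e : κ ≃ ι) :
    parikh (c ∘ e) = parikh c := by
  funext y
  simp only [parikh, ← Fintype.card_subtype]
  exact Fintype.card_congr (e.subtypeEquiv fun _ => Iff.rfl)

lemma exists_perm_of_parikh_eq {c c' : ι → α} (h : parikh c = parikh c') :
    ∃ σ : Equiv.Perm ι, c' = c ∘ σ := by
  have hfib : ∀ y, Fintype.card {k // c' k = y} = Fintype.card {k // c k = y} := by
    simpa only [parikh, Fintype.card_subtype] using fun y => (congrFun h y).symm
  let σ := Equiv.ofFiberEquiv fun y => Fintype.equivOfCardEq (hfib y)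
  exact ⟨σ, funext fun k => (Equiv.ofFiberEquiv_map _ k).symm⟩

lemma exists_parikh_eq [Fintype α] {n : ℕ} (P : α → ℕ) (hP : ∑ y, P y = n) :
    ∃ c : Fin n → α, parikh c = P := by
  have hcard : Fintype.card (Σ y, Fin (P y)) = Fintype.card (Fin n) := by simp [hP]
  refine ⟨Sigma.fst ∘ Fintype.equivOfCardEq hcard.symm, ?_⟩
  rw [parikh_comp_equiv]
  funext y
  simp only [parikh, ← Fintype.card_subtype, Fintype.card_congr (Equiv.sigmaSubtype y),
    Fintype.card_fin]

end Parikh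

section JointType

variable {n p : ℕ}

lemma Dmat_apply_eq_parikh (a b : Fin n → Fin p) (i j : Fin p) :
    Dmat a b i j = parikh (fun k => (a k, b k)) (i, j) := by
  simp only [Dmat, parikh, Matrix.of_apply, Prod.ext_iff]

lemma sum_Dmat (a b : Fin n → Fin p) : ∑ i, ∑ j, Dmat a b i j = n := by
  simpa only [Dmat_apply_eq_parikh, Fintype.sum_prod_type, Fintype.card_fin]
    using sum_parikh fun k => (a k, b k)

lemma Dmat_comp_perm (a b : Fin n → Fin p) (σ : Equiv.Perm (Fin n)) :
    Dmat (a ∘ σ) (b ∘ σ) = Dmat a b := by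
  ext i j
  rw [Dmat_apply_eq_parikh, Dmat_apply_eq_parikh]
  exact congrFun (parikh_comp_equiv (fun k => (a k, b k)) σ) (i, j)

lemma exists_perm_of_Dmat_eq {a b a' b' : Fin n → Fin p} (h : Dmat a b = Dmat a' b') :
    ∃ σ : Equiv.Perm (Fin n), a' = a ∘ σ ∧ b' = b ∘ σ := by
  have hP : parikh (fun k => (a k, b k)) = parikh (fun k => (a' k, b' k)) := by
    funext ⟨i, j⟩
    rw [← Dmat_apply_eq_parikh, ← Dmat_apply_eq_parikh, h]
  obtain ⟨σ, hσ⟩ := exists_perm_of_parikh_eq hP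
  exact ⟨σ, funext fun k => congrArg Prod.fst (congrFun hσ k),
    funext fun k => congrArg Prod.snd (congrFun hσ k)⟩

lemma exists_Dmat_eq (D : Matrix (Fin p) (Fin p) ℕ) (hD : ∑ i, ∑ j, D i j = n) :
    ∃ a b : Fin n → Fin p, Dmat a b = D := by
  obtain ⟨c, hc⟩ := exists_parikh_eq (n := n) (fun y : Fin p × Fin p => D y.1 y.2)
    (by rwa [Fintype.sum_prod_type])
  exact ⟨fun k => (c k).1, fun k => (c k).2, by ext i j; rw [Dmat_apply_eq_parikh]; exact congrFun hc (i, j)⟩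

lemma mem_invAlg_iff (M : Matrix (Fin n → Fin p) (Fin n → Fin p) ℂ) :
    M ∈ invAlg n p ↔ ∀ a b a' b', Dmat a b = Dmat a' b' → M a b = M a' b' := by
  refine ⟨fun hM a b a' b' h => ?_, fun hM σ a b => hM _ _ _ _ (Dmat_comp_perm a b _)⟩
  obtain ⟨σ, rfl, rfl⟩ := exists_perm_of_Dmat_eq h
  simpa [Function.comp_def] using (hM σ⁻¹ a b).symm

end JointType

/-- The paper's `P(n,p)`; `Dmat a b` is the joint type of the pair of words `(a, b)`. -/
abbrev JointTypes (n p : ℕ) := {D : Matrix (Fin p) (Fin p) ℕ // ∑ i, ∑ j, D i j = n}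

section Basis

variable {n p : ℕ}

def jointTypesEquivSym : JointTypes n p ≃ Sym (Fin p × Fin p) n :=
  ((Equiv.curry (Fin p) (Fin p) ℕ).symm.subtypeEquiv fun D => by
    simp [Fintype.sum_prod_type]).trans (Sym.equivNatSumOfFintype _ n).symm

instance : Finite (JointTypes n p) := .of_equiv _ jointTypesEquivSym.symm

lemma natCard_jointTypes (hp : 1 ≤ p) :
    Nat.card (JointTypes n p) = (n + p ^ 2 - 1).choose (p ^ 2 - 1) := by
  have hp2 : 1 ≤ p ^ 2 := Nat.one_le_pow _ _ hp
  rw [Nat.card_congr jointTypesEquivSym, Sym.natCard_sym_eq_choose, Nat.card_eq_fintype_card,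
    Fintype.card_prod, Fintype.card_fin, ← sq, ← Nat.choose_symm (by omega)]
  congr 1 <;> omega

def ofJointType : (JointTypes n p → ℂ) →ₗ[ℂ] invAlg n p where
  toFun c := ⟨Matrix.of fun a b => c ⟨Dmat a b, sum_Dmat a b⟩,
    (mem_invAlg_iff _).2 fun a b a' b' h => by simp only [Matrix.of_apply, h]⟩
  map_add' _ _ := rfl
  map_smul' _ _ := rfl

@[simp]
lemma ofJointType_apply (c : JointTypes n p → ℂ) (a b : Fin n → Fin p) :
    (ofJointType c : Matrix (Fin n → Fin p) (Fin n → Fin p) ℂ) a b = c ⟨Dmat a b, sum_Dmat a b⟩ :=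
  rfl

lemma ofJointType_bijective : Function.Bijective (ofJointType (n := n) (p := p)) := by
  choose wa wb hw using fun D : JointTypes n p => exists_Dmat_eq D.1 D.2
  refine ⟨fun c c' h => funext fun D => ?_, fun M => ⟨fun D => M.1 (wa D) (wb D), ?_⟩⟩
  · have := congrFun (congrFun (congrArg Subtype.val h) (wa D)) (wb D)
    simpa [hw] using this
  · ext a b
    exact (mem_invAlg_iff _).1 M.2 _ _ _ _ (hw _)

def invAlgBasis : Module.Basis (JointTypes n p) ℂ (invAlg n p) :=
  (Pi.basisFun ℂ _).map (LinearEquiv.ofBijective _ ofJointType_bijective)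

lemma coe_invAlgBasis (D : JointTypes n p) :
    (invAlgBasis D : Matrix (Fin n → Fin p) (Fin n → Fin p) ℂ) = AD n p D.1 := by
  ext a b
  simp [invAlgBasis, AD, Pi.single_apply, Subtype.ext_iff]

end Basis

theorem stmt_0_general (n p : ℕ) (hp : 1 ≤ p) :
    (∃ B : Module.Basis {D : Matrix (Fin p) (Fin p) ℕ // ∑ i, ∑ j, D i j = n} ℂ (invAlg n p),
        ∀ D, (B D : Matrix (Fin n → Fin p) (Fin n → Fin p) ℂ) = AD n p D.1) ∧
      Module.finrank ℂ (invAlg n p) = (n + p ^ 2 - 1).choose (p ^ 2 - 1) :=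
  ⟨⟨invAlgBasis, coe_invAlgBasis⟩,
    by rw [Module.finrank_eq_nat_card_basis invAlgBasis, natCard_jointTypes hp]⟩

/-- the matrices `A_D`, `D ∈ P(n,p)`, form a basis of `𝒜` over `ℂ`, and
`dim 𝒜 = C(n + p² - 1, p² - 1)`. -/
theorem stmt_0 (n p : ℕ) (hn : 1 ≤ n) (hp : 1 ≤ p) :
    (∃ B : Module.Basis {D : Matrix (Fin p) (Fin p) ℕ // ∑ i, ∑ j, D i j = n} ℂ (invAlg n p),
        ∀ D, (B D : Matrix (Fin n → Fin p) (Fin n → Fin p) ℂ) = AD n p D.1) ∧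
      Module.finrank ℂ (invAlg n p) = (n + p ^ 2 - 1).choose (p ^ 2 - 1) :=
  stmt_0_general n p hp
end
end

section
/- The map ψ : End_G(V) → ⊕_{λ=1}^{k} ℂ^{B_λ×B_λ} defined by ψ(A) := ⊕_{λ=1}^{k} (⟨Ab, b'⟩)_{b,b'∈B_λ} is a bijective ℂ-algebra homomorphism which moreover satisfies ψ(A*) = ψ(A)*, where A* is the adjoint of A with respect to the inner product and on each block * is the conjugate transpose. -/
/-!
`W_λ` is invariant under `End_G(V)`, so `ψ` is multiplicative and compatible with adjoints.
For surjectivity, take equivariant `A₁, A₂` with `A₁ e_λ = b`, `A₂ e_λ = b'`. By Schur's lemma the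
orthogonal projection `P_λ` onto `U_λ` (which is equivariant because `ρ` is unitary) acts on `W_λ`
as the projection onto `ℂ e_λ` and kills `W_μ` for `μ ≠ λ`; hence `‖e_λ‖² A₁ P_λ A₂*` is the matrix
unit `b' ↦ b` of block `λ`. For injectivity, if `ψ A = 0` then `A` kills every `W_λ`. Every
irreducible `X ≅ U_λ` meets `W_λ` nontrivially (in `P_X f* e_λ` for an isomorphism
`f : X → U_λ`), so `A` kills `X`. Since `(ker A)ᗮ` is a `G`-submodule, it then contains no
irreducible submodule, so it is zero and `A = 0`.
-/

open scoped Classical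

noncomputable section

variable {G V : Type*}

/-- A linear endomorphism is `G`-equivariant (a `G`-homomorphism) w.r.t. the action `ρ`. -/
def IsEquivariant [Group G] [AddCommGroup V] [Module ℂ V]
    (ρ : G →* (V →ₗ[ℂ] V)) (A : V →ₗ[ℂ] V) : Prop :=
  ∀ g v, A (ρ g v) = ρ g (A v)

/-- A subspace is a `G`-submodule: it is invariant under the action `ρ`. -/
def IsGSubmodule [Group G] [AddCommGroup V] [Module ℂ V]
    (ρ : G →* (V →ₗ[ℂ] V)) (U : Submodule ℂ V) : Prop :=
  ∀ g, ∀ x ∈ U, ρ g x ∈ U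

/-- A `G`-submodule is irreducible: it is nonzero and has no proper nonzero `G`-submodules. -/
def IsGIrreducible [Group G] [AddCommGroup V] [Module ℂ V]
    (ρ : G →* (V →ₗ[ℂ] V)) (U : Submodule ℂ V) : Prop :=
  U ≠ ⊥ ∧ ∀ W : Submodule ℂ V, IsGSubmodule ρ W → W ≤ U → W = ⊥ ∨ W = U

/-- Two `G`-submodules are isomorphic as `G`-modules: some equivariant linear map of `V`
restricts to a bijection between them. -/
def GIso [Group G] [AddCommGroup V] [Module ℂ V]
    (ρ : G →* (V →ₗ[ℂ] V)) (U₁ U₂ : Submodule ℂ V) : Prop :=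
  ∃ f : V →ₗ[ℂ] V, IsEquivariant ρ f ∧ Set.BijOn f U₁ U₂

open scoped InnerProductSpace
open Submodule

section BlockMatrix

variable {𝕜 E κ : Type*} [RCLike 𝕜] [NormedAddCommGroup E] [InnerProductSpace 𝕜 E]
  {ι : κ → Type*}

theorem Orthonormal.sum_inner_smul_eq_of_mem_span {η : Type*} [Fintype η] {v : η → E}
    (hv : Orthonormal 𝕜 v) {x : E} (hx : x ∈ span 𝕜 (Set.range v)) :
    ∑ i, ⟪v i, x⟫_𝕜 • v i = x := by
  obtain ⟨c, rfl⟩ := (mem_span_range_iff_exists_fun 𝕜).1 hx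
  simp only [hv.inner_right_fintype]

def blockMatrix (b : (l : κ) → ι l → E) :
    Module.End 𝕜 E →ₗ[𝕜] ((l : κ) → Matrix (ι l) (ι l) 𝕜) where
  toFun A l := Matrix.of fun i j => ⟪b l i, A (b l j)⟫_𝕜
  map_add' A B := by ext; simp [inner_add_right]
  map_smul' c A := by ext; simp [inner_smul_right]

@[simp]
theorem blockMatrix_apply (b : (l : κ) → ι l → E) (A : Module.End 𝕜 E) (l : κ) (i j : ι l) :
    blockMatrix b A l i j = ⟪b l i, A (b l j)⟫_𝕜 :=
  rfl

variable {b : (l : κ) → ι l → E}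

theorem blockMatrix_one [∀ l, DecidableEq (ι l)] (hb : ∀ l, Orthonormal 𝕜 (b l)) :
    blockMatrix (𝕜 := 𝕜) b 1 = 1 := by
  ext l i j
  simp [orthonormal_iff_ite.1 (hb l), Matrix.one_apply]

theorem blockMatrix_adjoint [FiniteDimensional 𝕜 E] (A : Module.End 𝕜 E) :
    blockMatrix b A.adjoint = star (blockMatrix b A) := by
  ext l i j
  simp [LinearMap.adjoint_inner_right]

variable [∀ l, Fintype (ι l)]

theorem blockMatrix_mul (hb : ∀ l, Orthonormal 𝕜 (b l)) {A B : Module.End 𝕜 E}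
    (hB : ∀ l j, B (b l j) ∈ span 𝕜 (Set.range (b l))) :
    blockMatrix b (A * B) = blockMatrix b A * blockMatrix b B := by
  ext l i j
  conv_lhs => rw [blockMatrix_apply, Module.End.mul_apply,
    ← (hb l).sum_inner_smul_eq_of_mem_span (hB l j)]
  simp [Matrix.mul_apply, inner_sum, inner_smul_right, mul_comm]

theorem apply_eq_zero_of_blockMatrix_eq_zero (hb : ∀ l, Orthonormal 𝕜 (b l))
    {A : Module.End 𝕜 E} (hA : ∀ l j, A (b l j) ∈ span 𝕜 (Set.range (b l)))
    (h : blockMatrix b A = 0) (l : κ) {x : E} (hx : x ∈ span 𝕜 (Set.range (b l))) :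
    A x = 0 := by
  suffices span 𝕜 (Set.range (b l)) ≤ LinearMap.ker A from this hx
  refine span_le.2 (Set.range_subset_iff.2 fun j => ?_)
  rw [SetLike.mem_coe, LinearMap.mem_ker, ← (hb l).sum_inner_smul_eq_of_mem_span (hA l j)]
  simp [← blockMatrix_apply, h]

theorem map_blockMatrix_eq_top [Fintype κ] [DecidableEq κ] [∀ l, DecidableEq (ι l)]
    {S : Submodule 𝕜 (Module.End 𝕜 E)}
    (hS : ∀ l i j, Pi.single (M := fun l => Matrix (ι l) (ι l) 𝕜) l (Matrix.single i j 1) ∈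
      S.map (blockMatrix b)) :
    S.map (blockMatrix b) = ⊤ := by
  rw [eq_top_iff, ← Module.Basis.span_eq (Pi.basis fun l => Matrix.stdBasis 𝕜 (ι l) (ι l)), span_le]
  rintro _ ⟨⟨l, i, j⟩, rfl⟩
  simpa [Matrix.stdBasis_eq_single] using hS l i j

end BlockMatrix

section Commutant

variable [Group G] [AddCommGroup V] [Module ℂ V] (ρ : G →* (V →ₗ[ℂ] V))

def commutant : Subalgebra ℂ (Module.End ℂ V) :=
  Subalgebra.centralizer ℂ (Set.range ρ)

variable {ρ}

theorem mem_commutant_iff {A : Module.End ℂ V} : A ∈ commutant ρ ↔ IsEquivariant ρ A := by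
  rw [commutant, Subalgebra.mem_centralizer_iff, Set.forall_mem_range]
  exact forall_congr' fun g => LinearMap.ext_iff.trans (forall_congr' fun v => eq_comm)

theorem isGSubmodule_ker {A : Module.End ℂ V} (hA : A ∈ commutant ρ) :
    IsGSubmodule ρ (LinearMap.ker A) := by
  intro g x hx
  rw [LinearMap.mem_ker] at hx ⊢
  rw [mem_commutant_iff.1 hA g x, hx, map_zero]

theorem IsGIrreducible.le_of_mem {U W : Submodule ℂ V} (hU : IsGIrreducible ρ U)
    (hUs : IsGSubmodule ρ U) (hW : IsGSubmodule ρ W) {x : V} (hxU : x ∈ U) (hxW : x ∈ W)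
    (hx : x ≠ 0) : U ≤ W := by
  have hUW : IsGSubmodule ρ (U ⊓ W) := fun g y hy => ⟨hUs g y hy.1, hW g y hy.2⟩
  rcases hU.2 _ hUW inf_le_left with h | h
  · have hx' : x ∈ U ⊓ W := ⟨hxU, hxW⟩
    exact absurd (h ▸ hx') (by simpa using hx)
  · exact h ▸ inf_le_right

/-- Schur's lemma. -/
theorem IsGIrreducible.eqOn_zero_or_bijOn {U₁ U₂ : Submodule ℂ V} (hU₁ : IsGIrreducible ρ U₁)
    (hU₁s : IsGSubmodule ρ U₁) (hU₂ : IsGIrreducible ρ U₂) {A : Module.End ℂ V}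
    (hA : A ∈ commutant ρ) (hmaps : Set.MapsTo A U₁ U₂) :
    Set.EqOn A 0 U₁ ∨ Set.BijOn A U₁ U₂ := by
  by_cases hker : ∃ x ∈ U₁, A x = 0 ∧ x ≠ 0
  · obtain ⟨x, hx, hAx, hx0⟩ := hker
    exact Or.inl fun y hy => hU₁.le_of_mem hU₁s (isGSubmodule_ker hA) hx hAx hx0 hy
  push Not at hker
  have hinj : Set.InjOn A U₁ := fun x hx y hy hxy =>
    sub_eq_zero.1 (by_contra fun h => h (hker _ (sub_mem hx hy) (by simp [hxy])))
  have himage : IsGSubmodule ρ (U₁.map A) := by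
    rintro g _ ⟨x, hx, rfl⟩
    exact ⟨ρ g x, hU₁s g x hx, mem_commutant_iff.1 hA g x⟩
  obtain ⟨x, hx, hx0⟩ := exists_mem_ne_zero_of_ne_bot hU₁.1
  have hne : U₁.map A ≠ ⊥ := fun h =>
    hx0 (hker x hx (by simpa [h] using mem_map_of_mem (f := A) hx))
  refine Or.inr ⟨hmaps, hinj, ?_⟩
  rcases hU₂.2 _ himage (map_le_iff_le_comap.2 hmaps) with h | h
  · exact absurd h hne
  · rw [← h]
    rintro _ ⟨y, hy, rfl⟩
    exact ⟨y, hy, rfl⟩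

/-- Schur's lemma over the algebraically closed field `ℂ`. -/
theorem IsGIrreducible.exists_eqOn_smul [FiniteDimensional ℂ V] {U : Submodule ℂ V}
    (hU : IsGIrreducible ρ U) (hUs : IsGSubmodule ρ U) {A : Module.End ℂ V}
    (hA : A ∈ commutant ρ) (hmaps : Set.MapsTo A U U) :
    ∃ c : ℂ, ∀ x ∈ U, A x = c • x := by
  have : Nontrivial U := nontrivial_iff_ne_bot.2 hU.1
  obtain ⟨c, hc⟩ := Module.End.exists_eigenvalue (A.restrict hmaps)
  obtain ⟨v, hv⟩ := hc.exists_hasEigenvector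
  have hAc : A - c • 1 ∈ commutant ρ := sub_mem hA (Subalgebra.smul_mem _ (one_mem _) c)
  have hv_ker : (v : V) ∈ LinearMap.ker (A - c • 1) := by
    have hAv : A v = c • (v : V) := congrArg Subtype.val hv.apply_eq_smul
    simp [hAv]
  refine ⟨c, fun x hx => ?_⟩
  have := hU.le_of_mem hUs (isGSubmodule_ker hAc) v.2 hv_ker (by simpa using hv.2) hx
  simpa [sub_eq_zero] using this

theorem exists_isGIrreducible_le [FiniteDimensional ℂ V] {W : Submodule ℂ V}
    (hW : IsGSubmodule ρ W) (hW0 : W ≠ ⊥) :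
    ∃ X, IsGIrreducible ρ X ∧ IsGSubmodule ρ X ∧ X ≤ W := by
  obtain ⟨X, ⟨hXs, hX0, hXW⟩, hmin⟩ := wellFounded_lt.has_min
    {X : Submodule ℂ V | IsGSubmodule ρ X ∧ X ≠ ⊥ ∧ X ≤ W} ⟨W, hW, hW0, le_rfl⟩
  refine ⟨X, ⟨hX0, fun Y hYs hYX => ?_⟩, hXs, hXW⟩
  by_contra! hY
  exact hmin Y ⟨hYs, hY.1, hYX.trans hXW⟩ (lt_of_le_of_ne hYX hY.2)

end Commutant

section Unitary

variable [Group G] [NormedAddCommGroup V] [InnerProductSpace ℂ V] {ρ : G →* (V →ₗ[ℂ] V)}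

theorem inner_apply_right_eq_inner_inv_apply (hunit : ∀ g x y, ⟪ρ g x, ρ g y⟫_ℂ = ⟪x, y⟫_ℂ)
    (g : G) (x y : V) : ⟪x, ρ g y⟫_ℂ = ⟪ρ g⁻¹ x, y⟫_ℂ := by
  rw [← hunit g⁻¹, Representation.inv_self_apply]

theorem IsGSubmodule.orthogonal (hunit : ∀ g x y, ⟪ρ g x, ρ g y⟫_ℂ = ⟪x, y⟫_ℂ)
    {U : Submodule ℂ V} (hU : IsGSubmodule ρ U) : IsGSubmodule ρ Uᗮ := fun g x hx u hu => by
  rw [inner_apply_right_eq_inner_inv_apply hunit]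
  exact hx _ (hU g⁻¹ u hu)

variable [FiniteDimensional ℂ V]

theorem adjoint_mem_commutant (hunit : ∀ g x y, ⟪ρ g x, ρ g y⟫_ℂ = ⟪x, y⟫_ℂ)
    {A : Module.End ℂ V} (hA : A ∈ commutant ρ) : A.adjoint ∈ commutant ρ := by
  refine mem_commutant_iff.2 fun g v => ext_inner_left ℂ fun w => ?_
  rw [LinearMap.adjoint_inner_right, inner_apply_right_eq_inner_inv_apply hunit,
    inner_apply_right_eq_inner_inv_apply hunit, ← mem_commutant_iff.1 hA,
    LinearMap.adjoint_inner_right]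

theorem starProjection_mem_commutant (hunit : ∀ g x y, ⟪ρ g x, ρ g y⟫_ℂ = ⟪x, y⟫_ℂ)
    {U : Submodule ℂ V} (hU : IsGSubmodule ρ U) :
    (U.starProjection : Module.End ℂ V) ∈ commutant ρ := by
  refine mem_commutant_iff.2 fun g v => (eq_starProjection_of_mem_orthogonal
    (u := ρ g v) (hU g _ (starProjection_apply_mem U v)) ?_)
  rw [← map_sub]
  exact hU.orthogonal hunit g _ (sub_starProjection_mem_orthogonal v)

theorem eq_zero_of_forall_isGIrreducible_le_ker
    (hunit : ∀ g x y, ⟪ρ g x, ρ g y⟫_ℂ = ⟪x, y⟫_ℂ) {A : Module.End ℂ V} (hA : A ∈ commutant ρ)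
    (h : ∀ X, IsGIrreducible ρ X → IsGSubmodule ρ X → X ≤ LinearMap.ker A) : A = 0 := by
  by_contra hA0
  have hK : (LinearMap.ker A)ᗮ ≠ ⊥ := by
    rwa [Ne, orthogonal_eq_bot_iff, LinearMap.ker_eq_top]
  obtain ⟨X, hX, hXs, hXK⟩ := exists_isGIrreducible_le ((isGSubmodule_ker hA).orthogonal hunit) hK
  refine hX.1 (eq_bot_iff.2 ?_)
  rw [← (LinearMap.ker A).inf_orthogonal_eq_bot]
  exact le_inf (h X hX hXs) hXK

theorem starProjection_apply_eq_starProjection_singleton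
    (hunit : ∀ g x y, ⟪ρ g x, ρ g y⟫_ℂ = ⟪x, y⟫_ℂ) {U : Submodule ℂ V} (hU : IsGIrreducible ρ U)
    (hUs : IsGSubmodule ρ U) {e : V} (he : e ∈ U) {D : Module.End ℂ V} (hD : D ∈ commutant ρ) :
    U.starProjection (D e) = (ℂ ∙ e).starProjection (D e) := by
  obtain ⟨c, hc⟩ := hU.exists_eqOn_smul hUs (mul_mem (starProjection_mem_commutant hunit hUs) hD)
    fun x _ => starProjection_apply_mem U (D x)
  have hc : U.starProjection (D e) = c • e := hc e he
  calc U.starProjection (D e) = (ℂ ∙ e).starProjection (c • e) := by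
        rw [hc, starProjection_eq_self_iff.2 (smul_mem _ c (mem_span_singleton_self e))]
    _ = (ℂ ∙ e).starProjection (U.starProjection (D e)) := by rw [hc]
    _ = (ℂ ∙ e).starProjection (D e) := by
        rw [← ContinuousLinearMap.comp_apply, starProjection_comp_starProjection_of_le
          ((span_singleton_le_iff_mem e U).2 he)]

theorem starProjection_apply_eq_zero_of_not_gIso
    (hunit : ∀ g x y, ⟪ρ g x, ρ g y⟫_ℂ = ⟪x, y⟫_ℂ) {U₁ U₂ : Submodule ℂ V}
    (hU₁ : IsGIrreducible ρ U₁) (hU₁s : IsGSubmodule ρ U₁) (hU₂ : IsGIrreducible ρ U₂)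
    (hU₂s : IsGSubmodule ρ U₂) (hiso : ¬ GIso ρ U₁ U₂) {x : V} (hx : x ∈ U₁)
    {D : Module.End ℂ V} (hD : D ∈ commutant ρ) : U₂.starProjection (D x) = 0 := by
  have hPD := mul_mem (starProjection_mem_commutant hunit hU₂s) hD
  rcases hU₁.eqOn_zero_or_bijOn hU₁s hU₂ hPD fun y _ => starProjection_apply_mem U₂ (D y)
    with h | h
  · exact h hx
  · exact absurd ⟨_, mem_commutant_iff.1 hPD, h⟩ hiso

/-- An isomorphism `f : X → U` yields the equivariant map `P_X f*`, which does not kill `e`. -/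
theorem GIso.exists_mem_commutant_apply_mem_ne_zero
    (hunit : ∀ g x y, ⟪ρ g x, ρ g y⟫_ℂ = ⟪x, y⟫_ℂ) {X U : Submodule ℂ V} (hXs : IsGSubmodule ρ X)
    (hiso : GIso ρ X U) {e : V} (he : e ∈ U) (he0 : e ≠ 0) :
    ∃ D ∈ commutant ρ, D e ∈ X ∧ D e ≠ 0 := by
  obtain ⟨f, hf, hbij⟩ := hiso
  obtain ⟨x, hx, rfl⟩ := hbij.surjOn he
  refine ⟨X.starProjection * f.adjoint, mul_mem (starProjection_mem_commutant hunit hXs)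
    (adjoint_mem_commutant hunit (mem_commutant_iff.2 hf)), starProjection_apply_mem X _,
    fun h => he0 (inner_self_eq_zero (𝕜 := ℂ).1 ?_)⟩
  have hinner : ⟪(X.starProjection * f.adjoint : Module.End ℂ V) (f x), x⟫_ℂ = ⟪f x, f x⟫_ℂ := by
    rw [Module.End.mul_apply, ContinuousLinearMap.coe_coe, inner_starProjection_left_eq_right,
      starProjection_eq_self_iff.2 hx, LinearMap.adjoint_inner_left]
  rw [← hinner, h, inner_zero_left]

end Unitary

section Blocks

variable [Group G] [NormedAddCommGroup V] [InnerProductSpace ℂ V]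
  {ρ : G →* (V →ₗ[ℂ] V)} {κ : Type*} {U : κ → Submodule ℂ V} {e : κ → V} {ι : κ → Type*}
  {b : (l : κ) → ι l → V}

theorem apply_mem_span_of_mem_commutant
    (hW : ∀ l v, v ∈ span ℂ (Set.range (b l)) ↔ ∃ D ∈ commutant ρ, D (e l) = v)
    {A : Module.End ℂ V} (hA : A ∈ commutant ρ) (l : κ) (j : ι l) :
    A (b l j) ∈ span ℂ (Set.range (b l)) := by
  obtain ⟨D, hD, hDe⟩ := (hW l _).1 (subset_span ⟨j, rfl⟩)
  exact (hW l _).2 ⟨A * D, mul_mem hA hD, by rw [Module.End.mul_apply, hDe]⟩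

variable [FiniteDimensional ℂ V]

/-- With `A₁ e = b i` and `A₂ e = b j`, the matrix unit is `‖e‖² A₁ P_U A₂*`. -/
theorem single_mem_map_blockMatrix_commutant [DecidableEq κ] [∀ l, DecidableEq (ι l)]
    (hunit : ∀ g x y, ⟪ρ g x, ρ g y⟫_ℂ = ⟪x, y⟫_ℂ) (hsub : ∀ l, IsGSubmodule ρ (U l))
    (hirr : ∀ l, IsGIrreducible ρ (U l)) (hpairwise : ∀ l m, l ≠ m → ¬ GIso ρ (U l) (U m))
    (he : ∀ l, e l ∈ U l) (he0 : ∀ l, e l ≠ 0) (hON : ∀ l, Orthonormal ℂ (b l))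
    (hW : ∀ l v, v ∈ span ℂ (Set.range (b l)) ↔ ∃ D ∈ commutant ρ, D (e l) = v)
    (l : κ) (i j : ι l) :
    Pi.single (M := fun l => Matrix (ι l) (ι l) ℂ) l (Matrix.single i j 1) ∈
      (commutant ρ).toSubmodule.map (blockMatrix b) := by
  obtain ⟨A₁, hA₁, hA₁e⟩ := (hW l (b l i)).1 (subset_span ⟨i, rfl⟩)
  obtain ⟨A₂, hA₂, hA₂e⟩ := (hW l (b l j)).1 (subset_span ⟨j, rfl⟩)
  set S : Module.End ℂ V :=
    ((‖e l‖ ^ 2 : ℝ) : ℂ) • (A₁ * (U l).starProjection * A₂.adjoint) with hS_def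
  have hS : S ∈ commutant ρ := Subalgebra.smul_mem _ (mul_mem (mul_mem hA₁
    (starProjection_mem_commutant hunit (hsub l))) (adjoint_mem_commutant hunit hA₂)) _
  have hS_self : ∀ D ∈ commutant ρ, S (D (e l)) = ⟪b l j, D (e l)⟫_ℂ • b l i := by
    intro D hD
    have hnorm : ((‖e l‖ ^ 2 : ℝ) : ℂ) ≠ 0 := by simpa using he0 l
    rw [hS_def, LinearMap.smul_apply, Module.End.mul_apply, Module.End.mul_apply,
      ← Module.End.mul_apply _ D, ContinuousLinearMap.coe_coe,
      starProjection_apply_eq_starProjection_singleton hunit (hirr l) (hsub l) (he l)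
        (mul_mem (adjoint_mem_commutant hunit hA₂) hD),
      starProjection_singleton, map_smul, smul_smul, Module.End.mul_apply,
      LinearMap.adjoint_inner_right, hA₁e, hA₂e]
    exact congrArg (· • b l i) (mul_div_cancel₀ _ hnorm)
  have hS_other : ∀ m ≠ l, ∀ D ∈ commutant ρ, S (D (e m)) = 0 := by
    intro m hm D hD
    rw [hS_def, LinearMap.smul_apply, Module.End.mul_apply, Module.End.mul_apply,
      ← Module.End.mul_apply _ D, ContinuousLinearMap.coe_coe,
      starProjection_apply_eq_zero_of_not_gIso hunit (hirr m) (hsub m) (hirr l) (hsub l)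
        (hpairwise m l hm) (he m) (mul_mem (adjoint_mem_commutant hunit hA₂) hD),
      map_zero, smul_zero]
  refine ⟨S, hS, ?_⟩
  ext m a c
  obtain ⟨D, hD, hDe⟩ := (hW m (b m c)).1 (subset_span ⟨c, rfl⟩)
  by_cases hm : m = l
  · subst hm
    rw [blockMatrix_apply, ← hDe, hS_self D hD, hDe, inner_smul_right,
      orthonormal_iff_ite.1 (hON m), orthonormal_iff_ite.1 (hON m), Pi.single_eq_same,
      Matrix.single_apply]
    by_cases hai : a = i
    · simp [hai]
    · simp [hai, Ne.symm hai]
  · rw [blockMatrix_apply, ← hDe, hS_other m hm D hD, inner_zero_right, Pi.single_eq_of_ne hm]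
    rfl

variable [∀ l, Fintype (ι l)]

theorem eq_zero_of_blockMatrix_eq_zero (hunit : ∀ g x y, ⟪ρ g x, ρ g y⟫_ℂ = ⟪x, y⟫_ℂ)
    (hcomplete : ∀ W : Submodule ℂ V, IsGSubmodule ρ W → IsGIrreducible ρ W →
      ∃ l, GIso ρ W (U l))
    (he : ∀ l, e l ∈ U l) (he0 : ∀ l, e l ≠ 0) (hON : ∀ l, Orthonormal ℂ (b l))
    (hW : ∀ l v, v ∈ span ℂ (Set.range (b l)) ↔ ∃ D ∈ commutant ρ, D (e l) = v)
    {A : Module.End ℂ V} (hA : A ∈ commutant ρ) (h : blockMatrix b A = 0) : A = 0 := by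
  have hAW : ∀ l, ∀ D ∈ commutant ρ, A (D (e l)) = 0 := fun l D hD =>
    apply_eq_zero_of_blockMatrix_eq_zero hON (apply_mem_span_of_mem_commutant hW hA) h l
      ((hW l _).2 ⟨D, hD, rfl⟩)
  refine eq_zero_of_forall_isGIrreducible_le_ker hunit hA fun X hX hXs => ?_
  obtain ⟨l, hiso⟩ := hcomplete X hXs hX
  obtain ⟨D, hD, hDX, hD0⟩ := hiso.exists_mem_commutant_apply_mem_ne_zero hunit hXs (he l) (he0 l)
  exact hX.le_of_mem hXs (isGSubmodule_ker hA) hDX (hAW l D hD) hD0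

end Blocks

theorem stmt_3_general [Group G] [NormedAddCommGroup V] [InnerProductSpace ℂ V]
    [FiniteDimensional ℂ V]
    (ρ : G →* (V →ₗ[ℂ] V))
    (hunit : ∀ g x y, (inner ℂ (ρ g x) (ρ g y) : ℂ) = inner ℂ x y)
    (k : ℕ) (U : Fin k → Submodule ℂ V)
    (hsub : ∀ lam, IsGSubmodule ρ (U lam))
    (hirr : ∀ lam, IsGIrreducible ρ (U lam))
    (hpairwise : ∀ lam mu, lam ≠ mu → ¬ GIso ρ (U lam) (U mu))
    (hcomplete : ∀ W : Submodule ℂ V, IsGSubmodule ρ W → IsGIrreducible ρ W →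
      ∃ lam, GIso ρ W (U lam))
    (e : Fin k → V) (he : ∀ lam, e lam ∈ U lam) (he0 : ∀ lam, e lam ≠ 0)
    (ι : Fin k → Type*) [∀ lam, Fintype (ι lam)] [∀ lam, DecidableEq (ι lam)]
    (b : (lam : Fin k) → ι lam → V)
    (hON : ∀ lam, Orthonormal ℂ (b lam))
    (hspan : ∀ lam, (Submodule.span ℂ (Set.range (b lam)) : Set V) =
      {v | ∃ A : V →ₗ[ℂ] V, IsEquivariant ρ A ∧ A (e lam) = v}) :
    ∃ ψ : (V →ₗ[ℂ] V) → ((lam : Fin k) → Matrix (ι lam) (ι lam) ℂ),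
      (∀ A, ψ A = fun lam => Matrix.of fun i j => (inner ℂ (b lam i) (A (b lam j)) : ℂ)) ∧
      IsLinearMap ℂ ψ ∧
      Set.BijOn ψ {A | IsEquivariant ρ A} Set.univ ∧
      ψ 1 = 1 ∧
      (∀ A B : V →ₗ[ℂ] V, IsEquivariant ρ A → IsEquivariant ρ B →
        ψ (A * B) = ψ A * ψ B) ∧
      (∀ A : V →ₗ[ℂ] V, IsEquivariant ρ A →
        ψ (LinearMap.adjoint A) = star (ψ A)) := by
  have hW : ∀ lam v, v ∈ span ℂ (Set.range (b lam)) ↔ ∃ D ∈ commutant ρ, D (e lam) = v :=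
    fun lam v => by simpa [mem_commutant_iff] using Set.ext_iff.1 (hspan lam) v
  have hsurj : (commutant ρ).toSubmodule.map (blockMatrix b) = ⊤ := map_blockMatrix_eq_top
    (single_mem_map_blockMatrix_commutant hunit hsub hirr hpairwise he he0 hON hW)
  refine ⟨blockMatrix b, fun A => rfl, (blockMatrix b).isLinear, ⟨fun _ _ => trivial, ?_, ?_⟩,
    blockMatrix_one hON, fun A B _ hB => blockMatrix_mul hON
      (apply_mem_span_of_mem_commutant hW (mem_commutant_iff.2 hB)),
    fun A _ => blockMatrix_adjoint A⟩
  · intro A hA B hB hAB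
    rw [← sub_eq_zero]
    refine eq_zero_of_blockMatrix_eq_zero hunit hcomplete he he0 hON hW
      (sub_mem (mem_commutant_iff.2 hA) (mem_commutant_iff.2 hB)) ?_
    rw [map_sub, hAB, sub_self]
  · intro M _
    obtain ⟨A, hA, hAM⟩ := mem_map.1 (hsurj ▸ mem_top : M ∈ _)
    exact ⟨A, mem_commutant_iff.1 hA, hAM⟩

/-- given a complete set `U_1, …, U_k` of irreducible `G`-submodules of `V`,
nonzero vectors `e_λ ∈ U_λ`, and orthonormal bases `B_λ = (b λ i)` of
`W_λ = {A e_λ : A ∈ End_G(V)}`, the map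
`ψ : A ↦ ⊕_λ (⟨A b, b'⟩)_{b,b' ∈ B_λ}` is a bijective ℂ-algebra `∗`-homomorphism from
`End_G(V)` onto `⊕_λ ℂ^{B_λ × B_λ}`. -/
theorem stmt_3 [Group G] [Fintype G] [NormedAddCommGroup V] [InnerProductSpace ℂ V]
    [FiniteDimensional ℂ V]
    (ρ : G →* (V →ₗ[ℂ] V))
    (hunit : ∀ g x y, (inner ℂ (ρ g x) (ρ g y) : ℂ) = inner ℂ x y)
    (k : ℕ) (U : Fin k → Submodule ℂ V)
    (hsub : ∀ lam, IsGSubmodule ρ (U lam))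
    (hirr : ∀ lam, IsGIrreducible ρ (U lam))
    (hpairwise : ∀ lam mu, lam ≠ mu → ¬ GIso ρ (U lam) (U mu))
    (hcomplete : ∀ W : Submodule ℂ V, IsGSubmodule ρ W → IsGIrreducible ρ W →
      ∃ lam, GIso ρ W (U lam))
    (e : Fin k → V) (he : ∀ lam, e lam ∈ U lam) (he0 : ∀ lam, e lam ≠ 0)
    (ι : Fin k → Type*) [∀ lam, Fintype (ι lam)] [∀ lam, DecidableEq (ι lam)]
    (b : (lam : Fin k) → ι lam → V)
    (hON : ∀ lam, Orthonormal ℂ (b lam))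
    (hspan : ∀ lam, (Submodule.span ℂ (Set.range (b lam)) : Set V) =
      {v | ∃ A : V →ₗ[ℂ] V, IsEquivariant ρ A ∧ A (e lam) = v}) :
    ∃ ψ : (V →ₗ[ℂ] V) → ((lam : Fin k) → Matrix (ι lam) (ι lam) ℂ),
      (∀ A, ψ A = fun lam => Matrix.of fun i j => (inner ℂ (b lam i) (A (b lam j)) : ℂ)) ∧
      IsLinearMap ℂ ψ ∧
      Set.BijOn ψ {A | IsEquivariant ρ A} Set.univ ∧
      ψ 1 = 1 ∧
      (∀ A B : V →ₗ[ℂ] V, IsEquivariant ρ A → IsEquivariant ρ B →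
        ψ (A * B) = ψ A * ψ B) ∧
      (∀ A : V →ₗ[ℂ] V, IsEquivariant ρ A →
        ψ (LinearMap.adjoint A) = star (ψ A)) :=
  stmt_3_general ρ hunit k U hsub hirr hpairwise hcomplete e he he0 ι b hON hspan
end
end

section
/- For all i ≠ j in [p] and all D ∈ P(n,p): A_D · A_{i→j} = Σ_{k : D_{k,i} > 0} (D_{k,j} + 1) · A_{D − E_{k,i} + E_{k,j}} and A_{i→j} · A_D = Σ_{k : D_{j,k} > 0} (D_{i,k} + 1) · A_{D − E_{j,k} + E_{i,k}}. -/
open scoped Classical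
open Matrix

noncomputable section

/-- The 0/1 matrix `A_{i→j}` with `(A_{i→j})_{a,b} = 1` iff `b` is obtained from `a` by
changing one symbol `i` into a `j` (at some position `k`, all other positions agreeing). -/
def Aarrow (n p : ℕ) (i j : Fin p) : Matrix (Fin n → Fin p) (Fin n → Fin p) ℂ :=
  Matrix.of fun a b =>
    if ∃ k, a k = i ∧ b k = j ∧ ∀ l, l ≠ k → a l = b l then 1 else 0

/-- The matrix unit `E_{k,l} ∈ ℕ^{p×p}`. -/
def Emat (p : ℕ) (k l : Fin p) : Matrix (Fin p) (Fin p) ℕ :=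
  Matrix.of fun r s => if r = k ∧ s = l then 1 else 0

/-! `(A_D A_{i→j})_{a,c}` counts the positions `m` with `c_m = j` for which `b = c[m ↦ i]`
satisfies `D(a,b) = D`. Changing `c_m` from `j` to `i` moves one unit of `D(a,c)` from entry
`(a_m, j)` to `(a_m, i)`, so whether `m` counts depends only on `k = a_m`, and then there are
`D(a,c)_{k,j} = D_{k,j} + 1` such positions. The second identity is the transpose of the first,
as `A_Dᵀ = A_{Dᵀ}` and `A_{i→j}ᵀ = A_{j→i}`. -/

section

variable {n p : ℕ}

lemma Emat_apply (k l r s : Fin p) : Emat p k l r s = if r = k ∧ s = l then 1 else 0 := rfl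

lemma Dmat_apply (a b : Fin n → Fin p) (r s : Fin p) :
    Dmat a b r s = ∑ m, if a m = r ∧ b m = s then 1 else 0 := by
  simp only [Dmat, of_apply, Finset.card_filter]

lemma Emat_transpose (k l : Fin p) : (Emat p k l)ᵀ = Emat p l k := by
  ext r s
  simp only [Emat_apply, transpose_apply, and_comm]

lemma Dmat_transpose (a b : Fin n → Fin p) : (Dmat a b)ᵀ = Dmat b a := by
  ext r s
  simp only [Dmat_apply, transpose_apply, and_comm]

lemma AD_transpose (D : Matrix (Fin p) (Fin p) ℕ) : (AD n p D)ᵀ = AD n p Dᵀ := by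
  ext a b
  simp only [transpose_apply, AD, of_apply]
  exact if_congr (by rw [← Dmat_transpose, ← transpose_inj, transpose_transpose]) rfl rfl

lemma Aarrow_transpose (i j : Fin p) : (Aarrow n p i j)ᵀ = Aarrow n p j i := by
  ext a b
  simp only [Aarrow, transpose_apply, of_apply, eq_comm (a := b _)]
  congr 1
  exact propext <| exists_congr fun k => by tauto

lemma Dmat_update_add_Emat (a c : Fin n → Fin p) (m : Fin n) (x : Fin p) :
    Dmat a (Function.update c m x) + Emat p (a m) (c m) = Dmat a c + Emat p (a m) x := by
  ext r s
  simp only [Matrix.add_apply, Dmat_apply, Emat_apply]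
  rw [← Finset.add_sum_erase _ _ (Finset.mem_univ m),
    ← Finset.add_sum_erase _ _ (Finset.mem_univ m),
    Finset.sum_congr rfl fun l hl => by rw [Function.update_of_ne (Finset.ne_of_mem_erase hl)],
    Function.update_self]
  split_ifs <;> omega

lemma add_Emat_eq_add_Emat_iff {Y D : Matrix (Fin p) (Fin p) ℕ} {k i l j : Fin p}
    (h : (k, i) ≠ (l, j)) :
    Y + Emat p k i = D + Emat p l j ↔ 0 < D k i ∧ Y = D - Emat p k i + Emat p l j := by
  simp only [← Matrix.ext_iff, Matrix.add_apply, Matrix.sub_apply, Emat_apply]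
  simp only [ne_eq, Prod.ext_iff, not_and] at h
  constructor
  · intro hY
    refine ⟨?_, fun r s => ?_⟩
    · have := hY k i
      split_ifs at this <;> omega
    · have := hY r s
      split_ifs at this ⊢ <;> omega
  · rintro ⟨hpos, hY⟩ r s
    rw [hY]
    by_cases hrs : r = k ∧ s = i
    · obtain ⟨rfl, rfl⟩ := hrs
      rw [if_pos ⟨rfl, rfl⟩, if_neg fun h' => h h'.1 h'.2]
      omega
    · split_ifs <;> omega

lemma Aarrow_apply_eq_ite (i j : Fin p) (b c : Fin n → Fin p) :
    Aarrow n p i j b c =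
      if b ∈ (Finset.univ.filter (c · = j)).image (Function.update c · i) then 1 else 0 := by
  simp only [Aarrow, of_apply, Finset.mem_image, Finset.mem_filter, Finset.mem_univ, true_and,
    Function.update_eq_iff]
  exact if_congr (exists_congr fun m => by grind) rfl rfl

lemma mul_Aarrow_apply {i j : Fin p} (hij : i ≠ j)
    (M : Matrix (Fin n → Fin p) (Fin n → Fin p) ℂ) (a c : Fin n → Fin p) :
    (M * Aarrow n p i j) a c =
      ∑ m ∈ Finset.univ.filter (c · = j), M a (Function.update c m i) := by
  have hinj : Set.InjOn (Function.update c · i) (Finset.univ.filter (c · = j)) := by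
    intro m hm m' _ he
    by_contra hne
    have := congrFun he m
    simp only [Function.update_self, Function.update_of_ne hne] at this
    exact hij (this.trans (Finset.mem_filter.1 hm).2)
  simp only [mul_apply, Aarrow_apply_eq_ite, mul_ite, mul_one, mul_zero, Finset.sum_ite_mem,
    Finset.univ_inter, Finset.sum_image hinj]

lemma AD_mul_Aarrow {i j : Fin p} (hij : i ≠ j) (D : Matrix (Fin p) (Fin p) ℕ) :
    AD n p D * Aarrow n p i j =
      ∑ k ∈ Finset.univ.filter (fun k : Fin p => 0 < D k i),
        ((D k j + 1 : ℕ) : ℂ) • AD n p (D - Emat p k i + Emat p k j) := by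
  ext a c
  let hit : Fin p → Prop := fun k => 0 < D k i ∧ Dmat a c = D - Emat p k i + Emat p k j
  have hterm : ∀ m, c m = j →
      AD n p D a (Function.update c m i) = if hit (a m) then 1 else 0 := by
    intro m hm
    have hmove := Dmat_update_add_Emat a c m i
    rw [hm] at hmove
    refine if_congr ?_ rfl rfl
    rw [← add_left_inj (Emat p (a m) j), hmove, add_Emat_eq_add_Emat_iff (by simpa using hij)]
  have hcount : ∀ k, hit k → Dmat a c k j = D k j + 1 := by
    rintro k ⟨-, hk⟩
    simp [hk, Emat_apply, hij.symm]
  calc (AD n p D * Aarrow n p i j) a c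
      = ∑ m ∈ Finset.univ.filter (c · = j), if hit (a m) then 1 else 0 :=
        (mul_Aarrow_apply hij _ a c).trans
          (Finset.sum_congr rfl fun m hm => hterm m (Finset.mem_filter.1 hm).2)
    _ = ∑ k, ∑ m ∈ (Finset.univ.filter (c · = j)).filter (a · = k),
          if hit k then 1 else 0 :=
        (Finset.sum_fiberwise' _ a fun k => if hit k then (1 : ℂ) else 0).symm
    _ = ∑ k, if hit k then ((D k j + 1 : ℕ) : ℂ) else 0 := by
        refine Finset.sum_congr rfl fun k _ => ?_
        rw [Finset.sum_const, nsmul_eq_mul, mul_ite, mul_one, mul_zero]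
        split_ifs with hk
        · rw [← hcount k hk, Dmat, of_apply, Finset.filter_filter]
          simp only [and_comm]
        · rfl
    _ = _ := by
        simp only [Matrix.sum_apply, Matrix.smul_apply, AD, of_apply, smul_eq_mul, mul_ite,
          mul_one, mul_zero, Finset.sum_filter, hit, ite_and]

lemma Aarrow_mul_AD {i j : Fin p} (hij : i ≠ j) (D : Matrix (Fin p) (Fin p) ℕ) :
    Aarrow n p i j * AD n p D =
      ∑ k ∈ Finset.univ.filter (fun k : Fin p => 0 < D j k),
        ((D i k + 1 : ℕ) : ℂ) • AD n p (D - Emat p j k + Emat p i k) := by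
  rw [← transpose_transpose (Aarrow n p i j * AD n p D), transpose_mul, AD_transpose,
    Aarrow_transpose, AD_mul_Aarrow hij.symm, transpose_sum]
  simp only [transpose_smul, AD_transpose, transpose_add, transpose_sub, Emat_transpose,
    transpose_transpose, transpose_apply]
  -- the two sides differ only in the decidability instances of their filters
  rfl

end

theorem stmt_8_general (n p : ℕ) (i j : Fin p) (hij : i ≠ j)
    (D : Matrix (Fin p) (Fin p) ℕ) :
    (AD n p D * Aarrow n p i j =
      ∑ k ∈ Finset.univ.filter (fun k : Fin p => 0 < D k i),
        ((D k j + 1 : ℕ) : ℂ) • AD n p (D - Emat p k i + Emat p k j)) ∧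
    (Aarrow n p i j * AD n p D =
      ∑ k ∈ Finset.univ.filter (fun k : Fin p => 0 < D j k),
        ((D i k + 1 : ℕ) : ℂ) • AD n p (D - Emat p j k + Emat p i k)) :=
  ⟨AD_mul_Aarrow hij D, Aarrow_mul_AD hij D⟩

/-- for `i ≠ j`,
`A_D A_{i→j} = Σ_{k : D_{k,i} > 0} (D_{k,j}+1) A_{D - E_{k,i} + E_{k,j}}` and
`A_{i→j} A_D = Σ_{k : D_{j,k} > 0} (D_{i,k}+1) A_{D - E_{j,k} + E_{i,k}}`. -/
theorem stmt_8 (n p : ℕ) (hn : 1 ≤ n) (hp : 1 ≤ p) (i j : Fin p) (hij : i ≠ j)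
    (D : Matrix (Fin p) (Fin p) ℕ) (hD : ∑ r, ∑ s, D r s = n) :
    (AD n p D * Aarrow n p i j =
      ∑ k ∈ Finset.univ.filter (fun k : Fin p => 0 < D k i),
        ((D k j + 1 : ℕ) : ℂ) • AD n p (D - Emat p k i + Emat p k j)) ∧
    (Aarrow n p i j * AD n p D =
      ∑ k ∈ Finset.univ.filter (fun k : Fin p => 0 < D j k),
        ((D i k + 1 : ℕ) : ℂ) • AD n p (D - Emat p j k + Emat p i k)) :=
  stmt_8_general n p i j hij D
end
end

section
/- Let V be an m-dimensional complex vector space with bases u_1,…,u_m and v_1,…,v_m related by v_i = Σ_{j=1}^{m} c_{j,i} u_j. For ν ∈ ℕ^m with Σ_i ν_i = n, set v_ν := Σ_{a ∈ [m]^n, w(a)=ν} v_{a_1}⊗⋯⊗v_{a_n} ∈ V^{⊗n}, and define u_μ analogously. Then for every such ν: v_ν = Σ_{μ ∈ ℕ^m, Σμ=n} u_μ · c(μ,ν), where c(μ,ν) is the coefficient of the monomial x^ν := x_1^{ν_1}⋯x_m^{ν_m} in the polynomial ∏_{j=1}^{m} (x_1 c_{j,1} + x_2 c_{j,2} + ⋯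 + x_m c_{j,m})^{μ_j}. -/
/-!
Expanding each `v (a i)` in the basis `u` writes `v_ν` as
`Σ_b (Σ_{w(a) = ν} ∏ i, c (b i) (a i)) • u_{b 1} ⊗ ⋯ ⊗ u_{b n}`. The inner sum is the coefficient
of `x^ν` in `∏ i, (Σ_s x_s c (b i) s)`, a product that depends on the word `b` only through its
weight `μ = w(b)`, namely `∏ j, (Σ_s x_s c j s) ^ μ_j`. Grouping the words `b` by weight yields `u_μ`.
-/

open scoped Classical

noncomputable section

/-- The symmetrized basis tensor `w_ν = Σ_{a ∈ [m]^n, w(a) = ν} w_{a_1} ⊗ ⋯ ⊗ w_{a_n}`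
attached to a family `w : Fin m → V` and a decomposition `ν` of `n`. -/
noncomputable def symTensor (m n : ℕ) {V : Type*} [AddCommGroup V] [Module ℂ V]
    (w : Fin m → V) (ν : Fin m → ℕ) : PiTensorProduct ℂ (fun _ : Fin n => V) :=
  ∑ a ∈ (Finset.univ : Finset (Fin n → Fin m)).filter
      (fun a => ∀ s, (Finset.univ.filter fun i => a i = s).card = ν s),
    PiTensorProduct.tprod ℂ (fun i => w (a i))

open Finset MvPolynomial

section Words

variable {ι σ : Type*} [Fintype ι] [DecidableEq σ]

def wordWeight (a : ι → σ) (s : σ) : ℕ := #{i | a i = s}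

lemma sum_wordWeight [Fintype σ] (a : ι → σ) : ∑ s, wordWeight a s = Fintype.card ι :=
  (card_eq_sum_card_fiberwise fun i _ => mem_univ (a i)).symm

lemma wordWeight_le_card (a : ι → σ) (s : σ) : wordWeight a s ≤ Fintype.card ι :=
  card_filter_le _ _

lemma prod_comp_eq_prod_pow_wordWeight {M : Type*} [CommMonoid M] [Fintype σ] (f : σ → M)
    (a : ι → σ) : ∏ i, f (a i) = ∏ s, f s ^ wordWeight a s := by
  simp_rw [wordWeight, ← prod_const, prod_fiberwise' univ a f]

lemma prod_X_mul_C_eq_monomial {R : Type*} [CommSemiring R] [Fintype σ] (a : ι → σ)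
    (k : ι → R) :
    ∏ i, X (a i) * C (k i) =
      monomial (Finsupp.equivFunOnFinite.symm (wordWeight a)) (∏ i, k i) := by
  rw [prod_mul_distrib, ← map_prod, prod_comp_eq_prod_pow_wordWeight X, monomial_eq,
    Finsupp.prod_fintype _ _ (fun _ => pow_zero _), mul_comm]
  rfl

lemma coeff_prod_sum_X_mul_C {R : Type*} [CommSemiring R] [Fintype σ] [DecidableEq ι]
    (k : ι → σ → R) (ν : σ → ℕ) :
    coeff (Finsupp.equivFunOnFinite.symm ν) (∏ i, ∑ s, X s * C (k i s)) =
      ∑ a with wordWeight a = ν, ∏ i, k i (a i) := by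
  simp_rw [Fintype.prod_sum, coeff_sum, prod_X_mul_C_eq_monomial, coeff_monomial,
    (Finsupp.equivFunOnFinite.symm).injective.eq_iff, sum_ite, sum_const_zero, add_zero]

end Words

lemma MultilinearMap.map_sum_smul {R ι κ M N : Type*} [CommSemiring R] [Fintype ι]
    [DecidableEq ι] [Fintype κ] [AddCommMonoid M] [Module R M] [AddCommMonoid N] [Module R N]
    (f : MultilinearMap R (fun _ : ι => M) N) (c : ι → κ → R) (u : κ → M) :
    f (fun i => ∑ j, c i j • u j) = ∑ b : ι → κ, (∏ i, c i (b i)) • f (fun i => u (b i)) := by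
  simp_rw [f.map_sum, f.map_smul_univ]

section SymTensor

variable {m n : ℕ} {V : Type*} [AddCommGroup V] [Module ℂ V]

lemma symTensor_eq_sum (w : Fin m → V) (ν : Fin m → ℕ) :
    symTensor m n w ν =
      ∑ a with wordWeight a = ν, PiTensorProduct.tprod ℂ (fun i => w (a i)) := by
  simp_rw [symTensor, funext_iff]
  rfl

lemma symTensor_eq_sum_coeff_smul_tprod {u v : Fin m → V} {c : Fin m → Fin m → ℂ}
    (hc : ∀ i, v i = ∑ j, c j i • u j) (ν : Fin m → ℕ) :
    symTensor m n v ν =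
      ∑ b : Fin n → Fin m, coeff (Finsupp.equivFunOnFinite.symm ν)
        (∏ i, ∑ s, X s * C (c (b i) s)) • PiTensorProduct.tprod ℂ (fun i => u (b i)) := by
  simp_rw [symTensor_eq_sum, hc,
    (PiTensorProduct.tprod ℂ).map_sum_smul (fun i j => c j _), coeff_prod_sum_X_mul_C, sum_smul]
  exact sum_comm

lemma sum_smul_symTensor (u : Fin m → V) (F : (Fin m → ℕ) → ℂ) :
    ∑ μ ∈ (univ : Finset (Fin m → Fin (n + 1))).filter (fun μ => ∑ i, (μ i : ℕ) = n),
        F (fun i => μ i) • symTensor m n u (fun i => μ i) =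
      ∑ b : Fin n → Fin m, F (wordWeight b) • PiTensorProduct.tprod ℂ (fun i => u (b i)) := by
  let g : (Fin n → Fin m) → Fin m → Fin (n + 1) := fun b s =>
    ⟨wordWeight b s, Nat.lt_succ_of_le ((wordWeight_le_card b s).trans_eq (Fintype.card_fin n))⟩
  have hg : ∀ b μ, g b = μ ↔ wordWeight b = fun i => (μ i : ℕ) := by
    simp [g, funext_iff, Fin.ext_iff]
  rw [← sum_fiberwise_of_maps_to (s := univ) (t := {μ | ∑ i, (μ i : ℕ) = n}) (g := g)
    fun b _ => by simp [g, sum_wordWeight]]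
  refine sum_congr rfl fun μ _ => ?_
  rw [symTensor_eq_sum, smul_sum]
  refine sum_congr (filter_congr fun b _ => (hg b μ).symm) fun b hb => ?_
  rw [(hg b μ).1 (mem_filter.1 hb).2]

end SymTensor

theorem stmt_12_general (m n : ℕ) {V : Type*} [AddCommGroup V] [Module ℂ V]
    (u v : Module.Basis (Fin m) ℂ V) (c : Fin m → Fin m → ℂ)
    (hc : ∀ i, v i = ∑ j, c j i • u j)
    (ν : Fin m → ℕ) :
    symTensor m n v ν =
      ∑ μ ∈ (Finset.univ : Finset (Fin m → Fin (n + 1))).filter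
          (fun μ => ∑ i, (μ i : ℕ) = n),
        MvPolynomial.coeff (Finsupp.equivFunOnFinite.symm ν)
            (∏ j : Fin m, (∑ i : Fin m, MvPolynomial.X i * MvPolynomial.C (c j i)) ^ (μ j : ℕ)) •
          symTensor m n u (fun i => (μ i : ℕ)) := by
  rw [sum_smul_symTensor (F := fun μ => coeff (Finsupp.equivFunOnFinite.symm ν)
      (∏ j, (∑ i, X i * C (c j i)) ^ μ j)), symTensor_eq_sum_coeff_smul_tprod hc]
  simp_rw [prod_comp_eq_prod_pow_wordWeight (fun j => ∑ i, X i * C (c j i))]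

/-- if `v_i = Σ_j c_{j,i} u_j` relates two bases of `V`, then for every
decomposition `ν` of `n`, `v_ν = Σ_μ u_μ · c(μ,ν)`, where `c(μ,ν)` is the coefficient of
`x^ν` in `∏_j (x_1 c_{j,1} + ⋯ + x_m c_{j,m})^{μ_j}` (decompositions `μ` of `n` are
encoded with entries in `Fin (n+1)`). -/
theorem stmt_12 (m n : ℕ) {V : Type*} [AddCommGroup V] [Module ℂ V]
    (u v : Module.Basis (Fin m) ℂ V) (c : Fin m → Fin m → ℂ)
    (hc : ∀ i, v i = ∑ j, c j i • u j)
    (ν : Fin m → ℕ) (hν : ∑ i, ν i = n) :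
    symTensor m n v ν =
      ∑ μ ∈ (Finset.univ : Finset (Fin m → Fin (n + 1))).filter
          (fun μ => ∑ i, (μ i : ℕ) = n),
        MvPolynomial.coeff (Finsupp.equivFunOnFinite.symm ν)
            (∏ j : Fin m, (∑ i : Fin m, MvPolynomial.X i * MvPolynomial.C (c j i)) ^ (μ j : ℕ)) •
          symTensor m n u (fun i => (μ i : ℕ)) :=
  stmt_12_general m n u v c hc ν
end
end

section
/- Let p = 2, let n ≥ 1, let 0 ≤ k ≤ ⌊n/2⌋ and k ≤ i, j ≤ n−k, and let λ = (n−k, k). Let t_{k,i} denote the semistandard tableau of shape λ with entries in {1,2} whose second row consists of k entries equal to 2 and whose first row has its last i−k entries equal to 2 and all other entries equal to 1. Then ⟨e_{t_{k,i}}, e_{t_{k,j}}⟩ = δ_{i,j} · 2^k · C(n−2k, i−k). -/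
open scoped Classical
open Matrix

noncomputable section

/-- Row (0-indexed) of the `k`-th box (0-indexed, row-major numbering) of the Ferrers
diagram of `lam`: the number of indices `i` with `λ_0 + ⋯ + λ_i ≤ k`. -/
def rowOf (p : ℕ) (lam : Fin p → ℕ) (k : ℕ) : ℕ :=
  (Finset.univ.filter fun i : Fin p => (∑ j ∈ Finset.univ.filter (· ≤ i), lam j) ≤ k).card

/-- Column (0-indexed) of the `k`-th box of the Ferrers diagram of `lam`. -/
def colOf (p : ℕ) (lam : Fin p → ℕ) (k : ℕ) : ℕ :=
  k - ∑ j ∈ Finset.univ.filter (fun j : Fin p => (j : ℕ) < rowOf p lam k), lam j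

/-- The column group `C_λ`: permutations of the boxes mapping every box to a box
in the same column. -/
def colGroup (n p : ℕ) (lam : Fin p → ℕ) : Finset (Equiv.Perm (Fin n)) :=
  Finset.univ.filter fun σ => ∀ k : Fin n, colOf p lam (σ k : ℕ) = colOf p lam (k : ℕ)

/-- The row group `R_λ`: permutations of the boxes mapping every box to a box
in the same row. -/
def rowGroup (n p : ℕ) (lam : Fin p → ℕ) : Finset (Equiv.Perm (Fin n)) :=
  Finset.univ.filter fun σ => ∀ k : Fin n, rowOf p lam (σ k : ℕ) = rowOf p lam (k : ℕ)

/-- The vector `e_t = Σ_{σ ∈ C_λ} sgn(σ) Σ_{t' ∼ t} χ^{σ t'} ∈ ℂ^{[p]^n}`, where `t' ∼ t`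
means `t' = π t` for some `π ∈ R_λ`, and `(σ t)(k) = t(σ⁻¹ k)`. -/
noncomputable def eT (n p : ℕ) (lam : Fin p → ℕ) (t : Fin n → Fin p) :
    (Fin n → Fin p) → ℂ :=
  ∑ σ ∈ colGroup n p lam, ((Equiv.Perm.sign σ : ℤ) : ℂ) •
    ∑ t' ∈ Finset.univ.filter (fun t' : Fin n → Fin p =>
        ∃ π ∈ rowGroup n p lam, t' = fun k => t (π⁻¹ k)),
      (Pi.single (fun k => t' (σ⁻¹ k)) (1 : ℂ) : (Fin n → Fin p) → ℂ)

/-- The tableau `t_λ` whose entries in row `i` all equal `i`. -/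
def tLam (n p : ℕ) (hp : 0 < p) (lam : Fin p → ℕ) : Fin n → Fin p :=
  fun k => ⟨rowOf p lam (k : ℕ) % p, Nat.mod_lt _ hp⟩

/-- The vector `e_λ := e_{t_λ}`. -/
noncomputable def eLam (n p : ℕ) (hp : 0 < p) (lam : Fin p → ℕ) : (Fin n → Fin p) → ℂ :=
  eT n p lam (tLam n p hp lam)

/-- The standard inner product `⟨x,y⟩ = Σ_a x_a conj(y_a)` on `ℂ^{[2]^n}`. -/
noncomputable def sinner {n p : ℕ} (x y : (Fin n → Fin p) → ℂ) : ℂ :=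
  ∑ a, x a * (starRingEnd ℂ) (y a)

/-- The semistandard tableau `t_{k,i}` of shape `(n-k, k)` (identified with a word in
`[2]^n` via row-major numbering of the boxes: boxes `0,…,n-k-1` form the first row and
boxes `n-k,…,n-1` the second row): the second row consists of `k` entries `2`, the first
row has its last `i-k` entries equal to `2` and all other entries equal to `1` (the
symbols `1, 2` being the elements `0, 1` of `Fin 2`); thus box `b` carries the symbol
`2` iff `b ≥ n - i`. -/
def tki (n i : ℕ) : Fin n → Fin 2 :=
  fun b => if (b : ℕ) < n - i then 0 else 1

/-! Write `n = k + m + k`. The column group of `λ = (k + m, k)` is the product of the `k`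
transpositions exchanging the two boxes of a column of height two, so its elements correspond
to the sets `S` of such columns, with sign `(-1) ^ #S`. The row orbit of `t_{k,i}` consists of
the words with only `2`s in the second row and `i` letters `2` in all, and the number of `2`s
is invariant under permutations. Hence `e_{t_{k,i}}(a)` vanishes unless `a` has `i` letters
`2`, and then the sum over `S` factorizes as `∏_c (a(bottom c) - a(top c))`, reading the
letters as `0, 1`. This product is `±1` if every column of height two of `a` holds both
letters, and `0` otherwise; so `⟨e_{t_{k,i}}, e_{t_{k,j}}⟩` counts the words with `i = j`
letters `2` whose columns of height two are mixed: `2 ^ k` choices in these columns times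
`C(m, i - k)` choices in the rest of the first row. -/

open Finset

lemma Fin.two_ite_eq_one {R : Type*} [NonAssocSemiring R] (u : Fin 2) :
    (if u = 1 then (1 : R) else 0) = ((u : ℕ) : R) := by
  fin_cases u <;> simp

lemma Fin.two_ite_add_ite_of_ne {u v : Fin 2} (h : u ≠ v) :
    (if u = 1 then 1 else 0) + (if v = 1 then 1 else 0) = 1 := by
  fin_cases u <;> fin_cases v <;> simp_all

lemma Fin.two_add_one_eq_iff_ne {u v : Fin 2} : u + 1 = v ↔ u ≠ v := by
  fin_cases u <;> fin_cases v <;> simp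

lemma Fin.two_natCast_sub_sq (u v : Fin 2) :
    (((v : ℕ) : ℂ) - ((u : ℕ) : ℂ)) ^ 2 = if u ≠ v then 1 else 0 := by
  fin_cases u <;> fin_cases v <;> norm_num

theorem Fin.two_card_filter_eq {α : Type*} [Fintype α] {t w : α → Fin 2}
    (h : #{x | t x = 1} = #{x | w x = 1}) (y : Fin 2) : #{x | t x = y} = #{x | w x = y} := by
  have hcompl (u : α → Fin 2) : #{x | u x = 0} = Fintype.card α - #{x | u x = 1} := by
    rw [← card_univ, ← card_filter_add_card_filter_not (s := univ) (fun x => u x = 1)]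
    have : ∀ x, ¬u x = 1 ↔ u x = 0 := by omega
    simp only [this]
    omega
  fin_cases y
  · simp [hcompl, h]
  · exact h

theorem exists_perm_of_card_filter_eq {α β : Type*} [Fintype α] [DecidableEq β] (p : α → Prop)
    {t w : α → β} (hp : ∀ x, p x → t x = w x) (hcard : ∀ y, #{x | t x = y} = #{x | w x = y}) :
    ∃ π : Equiv.Perm α, (∀ x, p (π x) ↔ p x) ∧ ∀ x, w (π x) = t x := by
  have hsplit (u : α → β) (y : β) :
      #{x | p x ∧ u x = y} + #{x | ¬p x ∧ u x = y} = #{x | u x = y} := by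
    rw [← card_filter_add_card_filter_not (s := {x | u x = y}) p, filter_filter, filter_filter]
    simp only [and_comm]
  have hon (y : β) : #{x | p x ∧ t x = y} = #{x | p x ∧ w x = y} :=
    congrArg card (filter_congr fun x _ => and_congr_right fun hx => by rw [hp x hx])
  have hfib (c : Bool × β) : Fintype.card {x // (decide (p x), t x) = c} =
      Fintype.card {x // (decide (p x), w x) = c} := by
    obtain ⟨_ | _, y⟩ := c
    · simp only [Fintype.card_subtype, Prod.mk.injEq, decide_eq_false_iff_not]
      have := hsplit t y; have := hsplit w y; have := hon y; have := hcard y; omega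
    · simpa only [Fintype.card_subtype, Prod.mk.injEq, decide_eq_true_eq] using hon y
  let π := Equiv.ofFiberEquiv (f := fun x => (decide (p x), t x))
    (g := fun x => (decide (p x), w x)) fun c => Fintype.equivOfCardEq (hfib c)
  have hπ (x : α) : (decide (p (π x)), w (π x)) = (decide (p x), t x) :=
    Equiv.ofFiberEquiv_map (fun c => Fintype.equivOfCardEq (hfib c)) x
  refine ⟨π, fun x => ?_, fun x => (Prod.ext_iff.1 (hπ x)).2⟩
  simpa using (Prod.ext_iff.1 (hπ x)).1

theorem card_filter_card_eq_one_eq_choose (α : Type*) [Fintype α] [DecidableEq α] (r : ℕ) :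
    #{w : α → Fin 2 | #{x | w x = 1} = r} = (Fintype.card α).choose r := by
  rw [← card_univ, ← card_powersetCard]
  refine card_nbij' (fun w => univ.filter (w · = 1)) (fun s x => if x ∈ s then 1 else 0)
    ?_ ?_ ?_ ?_
  · intro w hw; simpa using hw
  · intro s hs; simpa using hs
  · intro w _
    funext x
    by_cases h : w x = 1
    · simp [h]
    · have : w x = 0 := by omega
      simp [this]
  · intro s _; ext x; simp

theorem eT_apply (n p : ℕ) (lam : Fin p → ℕ) (t a : Fin n → Fin p) :
    eT n p lam t a = ∑ σ ∈ colGroup n p lam, ((Equiv.Perm.sign σ : ℤ) : ℂ) *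
      if ∃ π ∈ rowGroup n p lam, (fun x => a (σ x)) = fun x => t (π⁻¹ x) then 1 else 0 := by
  have hsingle (σ : Equiv.Perm (Fin n)) (t' : Fin n → Fin p) :
      (a = fun x => t' (σ⁻¹ x)) ↔ t' = fun x => a (σ x) := by
    constructor <;> rintro rfl <;> funext x <;> simp
  rw [eT, Finset.sum_apply]
  refine sum_congr rfl fun σ _ => ?_
  simp only [Pi.smul_apply, Finset.sum_apply, smul_eq_mul, Pi.single_apply, hsingle,
    sum_ite_eq', mem_filter, mem_univ, true_and]

lemma tki_eq_one_iff {n i : ℕ} (x : Fin n) : tki n i x = 1 ↔ n - i ≤ x := by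
  unfold tki
  split_ifs
  · exact iff_of_false (by decide) (by omega)
  · exact iff_of_true rfl (by omega)

lemma card_tki_eq_one {n i : ℕ} (hi : i ≤ n) : #{x | tki n i x = 1} = i := by
  have := card_filter_add_card_filter_not (s := univ) fun x : Fin n => (x : ℕ) < n - i
  simp only [Fin.card_filter_val_lt, card_univ, Fintype.card_fin, not_lt] at this
  simp only [tki_eq_one_iff]
  omega

namespace TwoRowShape

variable {k m : ℕ}

/- The boxes of the diagram of `(k + m, k)` in row-major order: column `c < k` consists of
`topBox c` and `bottomBox c`, and column `k + j` of the single box `tailBox j`. -/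

def topBox (c : Fin k) : Fin (k + m + k) := Fin.castAdd k (Fin.castAdd m c)

def tailBox (j : Fin m) : Fin (k + m + k) := Fin.castAdd k (Fin.natAdd k j)

def bottomBox (c : Fin k) : Fin (k + m + k) := Fin.natAdd (k + m) c

@[simp] lemma val_topBox (c : Fin k) : (topBox (m := m) c : ℕ) = c := rfl

@[simp] lemma val_tailBox (j : Fin m) : (tailBox (k := k) j : ℕ) = k + j := rfl

@[simp] lemma val_bottomBox (c : Fin k) : (bottomBox (m := m) c : ℕ) = k + m + c := rfl

lemma topBox_ne_bottomBox (c : Fin k) : topBox (m := m) c ≠ bottomBox c := by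
  have := c.2
  exact Fin.ne_of_val_ne (by rw [val_topBox, val_bottomBox]; omega)

lemma forall_box_iff {P : Fin (k + m + k) → Prop} :
    (∀ x, P x) ↔ (∀ c, P (topBox c)) ∧ (∀ j, P (tailBox j)) ∧ ∀ c, P (bottomBox c) := by
  simp only [Fin.forall_fin_add, topBox, tailBox, bottomBox, and_assoc]

lemma forall_bottom_row_iff {P : Fin (k + m + k) → Prop} :
    (∀ x : Fin (k + m + k), k + m ≤ (x : ℕ) → P x) ↔ ∀ c, P (bottomBox c) := by
  rw [forall_box_iff]
  simp only [val_topBox, val_tailBox, val_bottomBox]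
  refine ⟨fun h c => h.2.2 c (by omega), fun h => ⟨fun c hc => ?_, fun j hj => ?_, fun c _ => h c⟩⟩
  all_goals omega

@[simp] lemma append_append_topBox {α : Type*} (x : Fin k → α) (y : Fin m → α) (z : Fin k → α)
    (c : Fin k) : Fin.append (Fin.append x y) z (topBox c) = x c := by
  simp [topBox]

@[simp] lemma append_append_tailBox {α : Type*} (x : Fin k → α) (y : Fin m → α) (z : Fin k → α)
    (j : Fin m) : Fin.append (Fin.append x y) z (tailBox j) = y j := by
  simp [tailBox]

@[simp] lemma append_append_bottomBox {α : Type*} (x : Fin k → α) (y : Fin m → α)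
    (z : Fin k → α) (c : Fin k) : Fin.append (Fin.append x y) z (bottomBox c) = z c := by
  simp [bottomBox]

lemma rowOf_shape (x : Fin (k + m + k)) :
    rowOf 2 ![k + m, k] x = if (x : ℕ) < k + m then 0 else 1 := by
  have h0 : (univ.filter (· ≤ (0 : Fin 2))) = {0} := by decide
  have h1 : (univ.filter (· ≤ (1 : Fin 2))) = univ := by decide
  simp only [rowOf, card_filter, Fin.sum_univ_two, h0, h1, sum_singleton, Matrix.cons_val_zero,
    Matrix.cons_val_one]
  have := x.2
  split_ifs <;> omega

lemma colOf_shape (x : Fin (k + m + k)) :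
    colOf 2 ![k + m, k] x = if (x : ℕ) < k + m then (x : ℕ) else x - (k + m) := by
  rw [colOf, rowOf_shape]
  split_ifs <;> simp [Finset.filter_eq']

lemma colOf_topBox (c : Fin k) : colOf 2 ![k + m, k] (topBox (m := m) c) = c := by
  rw [colOf_shape, if_pos (by rw [val_topBox]; omega), val_topBox]

lemma colOf_tailBox (j : Fin m) : colOf 2 ![k + m, k] (tailBox (k := k) j) = k + j := by
  rw [colOf_shape, if_pos (by simp), val_tailBox]

lemma colOf_bottomBox (c : Fin k) : colOf 2 ![k + m, k] (bottomBox (m := m) c) = c := by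
  rw [colOf_shape, if_neg (by simp), val_bottomBox]
  omega

lemma eq_tailBox_of_colOf_eq {j : Fin m} {y : Fin (k + m + k)}
    (h : colOf 2 ![k + m, k] y = k + j) : y = tailBox j := by
  revert y
  simp only [forall_box_iff, colOf_topBox, colOf_tailBox, colOf_bottomBox]
  simp only [Fin.ext_iff, val_tailBox, val_topBox, val_bottomBox]
  refine ⟨fun c h => ?_, fun j' h => ?_, fun c h => ?_⟩ <;> omega

lemma eq_topBox_or_eq_bottomBox_of_colOf_eq {c : Fin k} {y : Fin (k + m + k)}
    (h : colOf 2 ![k + m, k] y = c) : y = topBox c ∨ y = bottomBox c := by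
  revert y
  simp only [forall_box_iff, colOf_topBox, colOf_tailBox, colOf_bottomBox]
  simp only [Fin.ext_iff, val_tailBox, val_topBox, val_bottomBox]
  refine ⟨fun c' h => ?_, fun j h => ?_, fun c' h => ?_⟩ <;> omega

lemma mem_rowGroup_iff {π : Equiv.Perm (Fin (k + m + k))} :
    π ∈ rowGroup (k + m + k) 2 ![k + m, k] ↔ ∀ x, (k + m ≤ (π x : ℕ) ↔ k + m ≤ (x : ℕ)) := by
  simp only [rowGroup, mem_filter, mem_univ, true_and, rowOf_shape]
  refine forall_congr' fun x => ?_
  split_ifs <;> simp only [true_iff, false_iff] <;> omega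

theorem exists_rowGroup_eq_tki_iff {i : ℕ} (hki : k ≤ i) (hik : i ≤ k + m)
    (w : Fin (k + m + k) → Fin 2) :
    (∃ π ∈ rowGroup (k + m + k) 2 ![k + m, k], w = fun x => tki (k + m + k) i (π⁻¹ x)) ↔
      (∀ c, w (bottomBox c) = 1) ∧ #{x | w x = 1} = i := by
  have hbot (x : Fin (k + m + k)) (hx : k + m ≤ (x : ℕ)) : tki (k + m + k) i x = 1 :=
    (tki_eq_one_iff x).2 (by omega)
  constructor
  · rintro ⟨π, hπ, rfl⟩
    refine ⟨forall_bottom_row_iff.1 fun x hx => hbot _ ?_, ?_⟩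
    · rwa [← mem_rowGroup_iff.1 hπ, Equiv.Perm.coe_inv, Equiv.apply_symm_apply]
    · exact (card_equiv π⁻¹ (by simp)).trans (card_tki_eq_one (by omega))
  · rintro ⟨hw, hcard⟩
    obtain ⟨π, hrow, hπ⟩ := exists_perm_of_card_filter_eq (t := tki (k + m + k) i) (w := w)
      (fun x : Fin (k + m + k) => k + m ≤ (x : ℕ))
      (fun x hx => (hbot x hx).trans (forall_bottom_row_iff (P := (w · = 1)) |>.2 hw x hx).symm)
      (Fin.two_card_filter_eq ((card_tki_eq_one (by omega)).trans hcard.symm))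
    refine ⟨π, mem_rowGroup_iff.2 hrow, funext fun x => ?_⟩
    rw [← hπ (π⁻¹ x), Equiv.Perm.coe_inv, Equiv.apply_symm_apply]

lemma pairwise_commute_swap_topBox_bottomBox (S : Set (Fin k)) :
    S.Pairwise (Function.onFun Commute fun c => Equiv.swap (topBox (m := m) c) (bottomBox c)) :=
  fun c _ d _ hcd => by
    have := c.2; have := d.2; have := Fin.val_ne_iff.2 hcd
    refine (Equiv.Perm.disjoint_swap_swap ?_).commute
    simp only [List.nodup_cons, List.mem_cons, List.not_mem_nil, List.nodup_nil, Fin.ext_iff,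
      val_topBox, val_bottomBox, or_false, not_or, not_false_eq_true, and_true]
    omega

def colSwap (S : Finset (Fin k)) : Equiv.Perm (Fin (k + m + k)) :=
  S.noncommProd (fun c => Equiv.swap (topBox c) (bottomBox c))
    (pairwise_commute_swap_topBox_bottomBox _)

lemma colSwap_empty : colSwap (m := m) (∅ : Finset (Fin k)) = 1 :=
  Finset.noncommProd_empty _ _

lemma colSwap_insert {S : Finset (Fin k)} {c : Fin k} (hc : c ∉ S) :
    colSwap (m := m) (insert c S) = Equiv.swap (topBox c) (bottomBox c) * colSwap S :=
  Finset.noncommProd_insert_of_notMem _ _ _ _ hc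

lemma sign_colSwap (S : Finset (Fin k)) : Equiv.Perm.sign (colSwap (m := m) S) = (-1) ^ #S := by
  rw [colSwap, Finset.map_noncommProd, Finset.noncommProd_eq_prod]
  simp [Equiv.Perm.sign_swap (topBox_ne_bottomBox _)]

lemma colSwap_tailBox (S : Finset (Fin k)) (j : Fin m) : colSwap S (tailBox j) = tailBox j := by
  induction S using Finset.induction_on with
  | empty => simp [colSwap_empty]
  | insert c S hc ih =>
    have := j.2; have := c.2
    rw [colSwap_insert hc, Equiv.Perm.mul_apply, ih]
    exact Equiv.swap_apply_of_ne_of_ne (Fin.ne_of_val_ne (by rw [val_tailBox, val_topBox]; omega))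
      (Fin.ne_of_val_ne (by rw [val_tailBox, val_bottomBox]; omega))

lemma colSwap_topBox_bottomBox (S : Finset (Fin k)) (c : Fin k) :
    colSwap (m := m) S (topBox c) = (if c ∈ S then bottomBox c else topBox c) ∧
      colSwap (m := m) S (bottomBox c) = if c ∈ S then topBox c else bottomBox c := by
  induction S using Finset.induction_on with
  | empty => simp [colSwap_empty]
  | insert d S hd ih =>
    rw [colSwap_insert hd, Equiv.Perm.mul_apply, Equiv.Perm.mul_apply, ih.1, ih.2]
    by_cases hcd : c = d
    · subst hcd
      simp [hd]
    · have := c.2; have := d.2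
      have hval : (c : ℕ) ≠ d := Fin.val_ne_iff.2 hcd
      have h1 : topBox (m := m) c ≠ topBox d := Fin.ne_of_val_ne (by simpa using hval)
      have h2 : topBox (m := m) c ≠ bottomBox d :=
        Fin.ne_of_val_ne (by rw [val_topBox, val_bottomBox]; omega)
      have h3 : bottomBox (m := m) c ≠ topBox d :=
        Fin.ne_of_val_ne (by rw [val_topBox, val_bottomBox]; omega)
      have h4 : bottomBox (m := m) c ≠ bottomBox d := Fin.ne_of_val_ne (by simpa using hval)
      by_cases hc : c ∈ S <;>
        simp [hc, hcd, Equiv.swap_apply_of_ne_of_ne, h1, h2, h3, h4]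

lemma colSwap_mem_colGroup (S : Finset (Fin k)) :
    colSwap (m := m) S ∈ colGroup (k + m + k) 2 ![k + m, k] := by
  simp only [colGroup, mem_filter, mem_univ, true_and]
  rw [forall_box_iff]
  refine ⟨fun c => ?_, fun j => by rw [colSwap_tailBox], fun c => ?_⟩
  · rw [(colSwap_topBox_bottomBox S c).1]
    split_ifs <;> simp only [colOf_topBox, colOf_bottomBox]
  · rw [(colSwap_topBox_bottomBox S c).2]
    split_ifs <;> simp only [colOf_topBox, colOf_bottomBox]

lemma filter_colSwap_topBox_eq (S : Finset (Fin k)) :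
    ({c | colSwap (m := m) S (topBox c) = bottomBox c} : Finset (Fin k)) = S := by
  ext c
  simp [(colSwap_topBox_bottomBox S c).1, topBox_ne_bottomBox]

lemma colSwap_filter_topBox_eq {σ : Equiv.Perm (Fin (k + m + k))}
    (hσ : σ ∈ colGroup (k + m + k) 2 ![k + m, k]) :
    colSwap {c | σ (topBox c) = bottomBox c} = σ := by
  have hcol : ∀ x, colOf 2 ![k + m, k] (σ x) = colOf 2 ![k + m, k] x := (mem_filter.1 hσ).2
  have htop (c : Fin k) : σ (topBox c) = topBox c ∨ σ (topBox c) = bottomBox c :=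
    eq_topBox_or_eq_bottomBox_of_colOf_eq (by rw [hcol, colOf_topBox])
  have hbot (c : Fin k) : σ (bottomBox c) = topBox c ∨ σ (bottomBox c) = bottomBox c :=
    eq_topBox_or_eq_bottomBox_of_colOf_eq (by rw [hcol, colOf_bottomBox])
  have hinj (c : Fin k) : σ (topBox c) ≠ σ (bottomBox c) :=
    σ.injective.ne (topBox_ne_bottomBox c)
  ext1 x
  revert x
  rw [forall_box_iff]
  refine ⟨fun c => ?_, fun j => ?_, fun c => ?_⟩
  · rw [(colSwap_topBox_bottomBox _ c).1]
    by_cases hc : σ (topBox c) = bottomBox c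
    · simp [hc]
    · simp only [mem_filter, mem_univ, hc, true_and, if_false]
      exact ((htop c).resolve_right hc).symm
  · rw [colSwap_tailBox]
    exact (eq_tailBox_of_colOf_eq (by rw [hcol, colOf_tailBox])).symm
  · rw [(colSwap_topBox_bottomBox _ c).2]
    by_cases hc : σ (topBox c) = bottomBox c
    · simp only [mem_filter, mem_univ, hc, true_and, if_true]
      exact ((hbot c).resolve_right (hc ▸ (hinj c).symm)).symm
    · have h := (htop c).resolve_right hc
      simp only [mem_filter, mem_univ, hc, true_and, if_false]
      exact ((hbot c).resolve_left (h ▸ hinj c).symm).symm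

lemma sum_colGroup {M : Type*} [AddCommMonoid M] (f : Equiv.Perm (Fin (k + m + k)) → M) :
    ∑ σ ∈ colGroup (k + m + k) 2 ![k + m, k], f σ = ∑ S : Finset (Fin k), f (colSwap S) :=
  sum_nbij' (fun σ => ({c | σ (topBox c) = bottomBox c} : Finset (Fin k))) colSwap
    (fun _ _ => mem_univ _) (fun S _ => colSwap_mem_colGroup S)
    (fun _ hσ => colSwap_filter_topBox_eq hσ) (fun S _ => filter_colSwap_topBox_eq S)
    (fun _ hσ => by rw [colSwap_filter_topBox_eq hσ])

theorem sum_colGroup_sign_mul_ite_eq_prod (a : Fin (k + m + k) → Fin 2) :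
    ∑ σ ∈ colGroup (k + m + k) 2 ![k + m, k], ((Equiv.Perm.sign σ : ℤ) : ℂ) *
        (if ∀ c, a (σ (bottomBox c)) = 1 then 1 else 0) =
      ∏ c : Fin k, (((a (bottomBox c) : ℕ) : ℂ) - ((a (topBox c) : ℕ) : ℂ)) := by
  have hterm (S : Finset (Fin k)) :
      (if ∀ c, a (colSwap S (bottomBox c)) = 1 then (1 : ℂ) else 0) =
        (∏ c ∈ S, ((a (topBox c) : ℕ) : ℂ)) * ∏ c ∈ univ \ S, ((a (bottomBox c) : ℕ) : ℂ) := by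
    calc (if ∀ c, a (colSwap S (bottomBox c)) = 1 then (1 : ℂ) else 0)
        = ∏ c, if a (colSwap S (bottomBox c)) = 1 then (1 : ℂ) else 0 := by
          rw [Fintype.prod_boole]; congr
      _ = ∏ c, if c ∈ S then ((a (topBox c) : ℕ) : ℂ) else ((a (bottomBox c) : ℕ) : ℂ) := by
        refine prod_congr rfl fun c _ => ?_
        rw [(colSwap_topBox_bottomBox S c).2]
        by_cases hc : c ∈ S <;> simp only [hc, if_true, if_false, Fin.two_ite_eq_one]
      _ = _ := by
        rw [prod_ite, filter_mem_eq_inter, univ_inter, filter_not, filter_mem_eq_inter, univ_inter]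
  rw [sum_colGroup, prod_sub, powerset_univ]
  refine sum_congr rfl fun S _ => ?_
  rw [sign_colSwap, hterm]
  push_cast
  ring

theorem eT_tki_apply {i : ℕ} (hki : k ≤ i) (hik : i ≤ k + m) (a : Fin (k + m + k) → Fin 2) :
    eT (k + m + k) 2 ![k + m, k] (tki (k + m + k) i) a =
      if #{x | a x = 1} = i then ∏ c, (((a (bottomBox c) : ℕ) : ℂ) - ((a (topBox c) : ℕ) : ℂ))
      else 0 := by
  have hcard (σ : Equiv.Perm (Fin (k + m + k))) : #{x | a (σ x) = 1} = #{x | a x = 1} :=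
    card_equiv σ (by simp)
  simp only [eT_apply, exists_rowGroup_eq_tki_iff hki hik, hcard]
  split_ifs with h
  · simpa only [h, and_true] using sum_colGroup_sign_mul_ite_eq_prod a
  · simp [h]

theorem eT_tki_mul_conj_eT_tki {i j : ℕ} (hki : k ≤ i) (hik : i ≤ k + m) (hkj : k ≤ j)
    (hjk : j ≤ k + m) (a : Fin (k + m + k) → Fin 2) :
    eT (k + m + k) 2 ![k + m, k] (tki (k + m + k) i) a *
        starRingEnd ℂ (eT (k + m + k) 2 ![k + m, k] (tki (k + m + k) j) a) =
      if #{x | a x = 1} = i ∧ #{x | a x = 1} = j ∧ ∀ c, a (topBox c) ≠ a (bottomBox c) then 1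
      else 0 := by
  set P := ∏ c, (((a (bottomBox c) : ℕ) : ℂ) - ((a (topBox c) : ℕ) : ℂ))
  have hconj : starRingEnd ℂ P = P := by simp [P, map_prod]
  have hsq : P * P = if ∀ c, a (topBox c) ≠ a (bottomBox c) then 1 else 0 := calc
    P * P = ∏ c, if a (topBox c) ≠ a (bottomBox c) then (1 : ℂ) else 0 := by
      simp only [P, ← sq, ← prod_pow, Fin.two_natCast_sub_sq]
    _ = _ := by rw [Fintype.prod_boole]; congr
  rw [eT_tki_apply hki hik, eT_tki_apply hkj hjk, apply_ite (starRingEnd ℂ), hconj, map_zero]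
  by_cases hi : #{x | a x = 1} = i
  · by_cases hj : #{x | a x = 1} = j
    · rw [if_pos hi, if_pos hj, hsq]
      exact if_congr ⟨fun h => ⟨hi, hj, h⟩, fun h => h.2.2⟩ rfl rfl
    · rw [if_neg hj, mul_zero, if_neg fun h => hj h.2.1]
  · rw [if_neg hi, zero_mul, if_neg fun h => hi h.1]

lemma card_filter_eq_one_eq_add (a : Fin (k + m + k) → Fin 2) :
    #{x | a x = 1} = #{c | a (topBox c) = 1} + #{j | a (tailBox j) = 1} +
      #{c | a (bottomBox c) = 1} := by
  simp only [card_filter]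
  rw [Fin.sum_univ_add, Fin.sum_univ_add]
  rfl

lemma card_filter_eq_one_eq_add_of_ne {a : Fin (k + m + k) → Fin 2}
    (ha : ∀ c, a (topBox c) ≠ a (bottomBox c)) :
    #{x | a x = 1} = k + #{j | a (tailBox j) = 1} := by
  have hcol : #{c | a (topBox c) = 1} + #{c | a (bottomBox c) = 1} = k := by
    simp only [card_filter, ← sum_add_distrib, Fin.two_ite_add_ite_of_ne (ha _), sum_const,
      card_univ, Fintype.card_fin, smul_eq_mul, mul_one]
  rw [card_filter_eq_one_eq_add]
  omega

theorem card_filter_card_eq_and_topBox_ne_bottomBox {i : ℕ} (hki : k ≤ i) :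
    #{a : Fin (k + m + k) → Fin 2 | #{x | a x = 1} = i ∧ ∀ c, a (topBox c) ≠ a (bottomBox c)} =
      2 ^ k * m.choose (i - k) := by
  calc _ = #((univ : Finset (Fin k → Fin 2)) ×ˢ
        ({y : Fin m → Fin 2 | #{j | y j = 1} = i - k} : Finset _)) := by
        refine card_nbij' (fun a => (fun c => a (topBox c), fun j => a (tailBox j)))
          (fun xy => Fin.append (Fin.append xy.1 xy.2) fun c => xy.1 c + 1) ?_ ?_ ?_ ?_
        · intro a ha
          simp only [coe_filter, Set.mem_ofPred_eq, coe_product, coe_univ, Set.mem_prod,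
            Set.mem_univ, mem_univ, true_and] at ha ⊢
          have := card_filter_eq_one_eq_add_of_ne ha.2
          omega
        · rintro ⟨x, y⟩ hy
          simp only [coe_filter, Set.mem_ofPred_eq, coe_product, coe_univ, Set.mem_prod,
            Set.mem_univ, mem_univ, true_and] at hy ⊢
          refine ⟨?_, by simp⟩
          rw [card_filter_eq_one_eq_add_of_ne (by simp)]
          simp only [append_append_tailBox]
          omega
        · intro a ha
          simp only [coe_filter, Set.mem_ofPred_eq, mem_univ, true_and] at ha
          funext x
          revert x
          simp only [forall_box_iff, append_append_topBox, append_append_tailBox,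
            append_append_bottomBox, Fin.two_add_one_eq_iff_ne]
          exact ⟨fun _ => trivial, fun _ => trivial, ha.2⟩
        · rintro ⟨x, y⟩ -
          simp
    _ = _ := by
      rw [card_product, card_univ, Fintype.card_fun, Fintype.card_fin, Fintype.card_fin,
        card_filter_card_eq_one_eq_choose, Fintype.card_fin]

end TwoRowShape

theorem stmt_13_general (n k i j : ℕ) (hk : k ≤ n / 2)
    (hki : k ≤ i) (hin : i ≤ n - k) (hkj : k ≤ j) (hjn : j ≤ n - k) :
    sinner (eT n 2 ![n - k, k] (tki n i)) (eT n 2 ![n - k, k] (tki n j)) =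
      if i = j then ((2 ^ k * (n - 2 * k).choose (i - k) : ℕ) : ℂ) else 0 := by
  obtain ⟨m, rfl⟩ : ∃ m, n = k + m + k := ⟨n - 2 * k, by omega⟩
  rw [show k + m + k - k = k + m by omega] at hin hjn ⊢
  rw [show k + m + k - 2 * k = m by omega]
  simp only [sinner, TwoRowShape.eT_tki_mul_conj_eT_tki hki hin hkj hjn]
  split_ifs with hij
  · subst hij
    simp only [and_self_left, sum_boole,
      TwoRowShape.card_filter_card_eq_and_topBox_ne_bottomBox hki]
  · exact sum_eq_zero fun a _ => if_neg fun h => hij (h.1.symm.trans h.2.1)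

/-- for `λ = (n-k,k)`, `⟨e_{t_{k,i}}, e_{t_{k,j}}⟩ = δ_{i,j} 2^k C(n-2k, i-k)`. -/
theorem stmt_13 (n k i j : ℕ) (hn : 1 ≤ n) (hk : k ≤ n / 2)
    (hki : k ≤ i) (hin : i ≤ n - k) (hkj : k ≤ j) (hjn : j ≤ n - k) :
    sinner (eT n 2 ![n - k, k] (tki n i)) (eT n 2 ![n - k, k] (tki n j)) =
      if i = j then ((2 ^ k * (n - 2 * k).choose (i - k) : ℕ) : ℂ) else 0 :=
  stmt_13_general n k i j hk hki hin hkj hjn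
end
end

section
/- For all nonnegative integers n, k, t, i, j with k ≤ ⌊n/2⌋, k ≤ i ≤ n−k, k ≤ j ≤ n−k, t ≤ min(i,j) and i + j − t ≤ n, the following binomial identity holds: C(n−2k, i−k) · Σ_{s=0}^{j−k} (−1)^{j−t−s} C(n−k−i, s) C(i−k, j−k−s) C(k, j−t−s) = Σ_{u=0}^{n} (−1)^{u−t} C(u, t) C(n−2k, u−k) C(n−k−u, i−u) C(n−k−u, j−u). -/
/-!
Expand `C(n-k-u, j-u)` by Vandermonde along `n-k-u = (n-k-i) + (i-u)` and apply trinomial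
revision twice: the `u`-th term of the right side becomes
`C(n-2k, i-k) Σ_s C(n-k-i, s) C(i-k, j-k-s) C(j-k-s, u-k)` times `(-1)^(u-t) C(u,t)`.
After exchanging the sums, the inner sum `Σ_u (-1)^(u-t) C(u,t) C(m, u-k)` is, up to the sign
`(-1)^(m+k-t)`, the `m`-th forward difference of `x ↦ C(x,t)` at `k`, which is
`C(k, t-m) = C(k, m+k-t)`.
-/

noncomputable section

/-- Integer binomial coefficient `C(a,b)`, with the convention `C(a,b) = 0` if `b < 0`
or `b > a`. -/
def zchoose (a b : ℤ) : ℤ :=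
  if 0 ≤ b ∧ b ≤ a then (a.toNat).choose b.toNat else 0

/-- The sign `(-1)^z` for an integer `z`. -/
def isign (z : ℤ) : ℤ := if z % 2 = 0 then 1 else -1

open Finset

lemma isign_eq_negOnePow (z : ℤ) : isign z = z.negOnePow := by
  rw [isign]
  split_ifs with h
  · rw [Int.negOnePow_even z (Int.even_iff.mpr h), Units.val_one]
  · rw [Int.negOnePow_odd z (Int.not_even_iff_odd.mp (mt Int.even_iff.mp h)), Units.val_neg,
      Units.val_one]

lemma zchoose_of_neg {a b : ℤ} (h : b < 0) : zchoose a b = 0 := by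
  rw [zchoose, if_neg (by omega)]

lemma zchoose_of_lt {a b : ℤ} (h : a < b) : zchoose a b = 0 := by
  rw [zchoose, if_neg (by omega)]

lemma zchoose_natCast (a b : ℕ) : zchoose a b = a.choose b := by
  by_cases h : b ≤ a
  · rw [zchoose, if_pos (by omega), Int.toNat_natCast, Int.toNat_natCast]
  · rw [zchoose_of_lt (by omega), Nat.choose_eq_zero_of_lt (by omega), Nat.cast_zero]

lemma zchoose_symm (a : ℕ) (b : ℤ) : zchoose a (a - b) = zchoose a b := by
  rcases lt_or_ge b 0 with hb | hb
  · rw [zchoose_of_neg hb, zchoose_of_lt (by omega)]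
  rcases le_or_gt b a with hba | hba
  · lift b to ℕ using hb
    rw [← Nat.cast_sub (by omega), zchoose_natCast, zchoose_natCast, Nat.choose_symm (by omega)]
  · rw [zchoose_of_lt hba, zchoose_of_neg (by omega)]

lemma zchoose_mul (a : ℕ) (b c : ℤ) :
    zchoose a c * zchoose c b = zchoose a b * zchoose (a - b) (c - b) := by
  rcases lt_or_ge b 0 with hb | hb
  · rw [zchoose_of_neg hb, zchoose_of_neg hb, mul_zero, zero_mul]
  rcases lt_or_ge c b with hcb | hcb
  · rw [zchoose_of_lt hcb, zchoose_of_neg (by omega : c - b < 0), mul_zero, mul_zero]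
  rcases lt_or_ge (a : ℤ) c with hac | hac
  · rw [zchoose_of_lt hac, zchoose_of_lt (by omega : (a : ℤ) - b < c - b), zero_mul, mul_zero]
  lift b to ℕ using hb
  lift c to ℕ using (by omega)
  rw [← Nat.cast_sub (by omega), ← Nat.cast_sub (by omega)]
  simp only [zchoose_natCast]
  exact_mod_cast Nat.choose_mul (by omega)

lemma zchoose_add_eq_sum (a b : ℕ) (m : ℤ) (N : ℕ) (hm : m ≤ N) :
    zchoose ((a : ℤ) + b) m = ∑ s ∈ range (N + 1), zchoose a s * zchoose b (m - s) := by
  rcases lt_or_ge m 0 with hm0 | hm0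
  · rw [zchoose_of_neg hm0]
    exact (sum_eq_zero fun s _ ↦ by rw [zchoose_of_neg (b := m - s) (by omega), mul_zero]).symm
  lift m to ℕ using hm0
  rw [show N + 1 = (m + 1) + (N - m) by omega, sum_range_add,
    sum_eq_zero (s := range (N - m)) fun s _ ↦ by
      rw [zchoose_of_neg (b := (m : ℤ) - ↑(m + 1 + s)) (by omega), mul_zero],
    add_zero, ← Nat.cast_add, zchoose_natCast, Nat.add_choose_eq,
    Nat.sum_antidiagonal_eq_sum_range_succ_mk, Nat.cast_sum]
  refine sum_congr rfl fun s hs ↦ ?_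
  rw [mem_range] at hs
  rw [← Nat.cast_sub (by omega), zchoose_natCast, zchoose_natCast, Nat.cast_mul]

lemma fwdDiff_iter_choose_eq_zchoose (t m x : ℕ) :
    (fwdDiff 1)^[m] (fun y ↦ y.choose t : ℕ → ℤ) x = zchoose x ((t : ℤ) - m) := by
  rcases le_or_gt m t with hmt | htm
  · obtain ⟨j, rfl⟩ := Nat.exists_eq_add_of_le hmt
    rw [fwdDiff_iter_choose, Nat.cast_add, add_sub_cancel_left, zchoose_natCast]
  · obtain ⟨r, rfl⟩ := Nat.exists_eq_add_of_lt htm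
    have hconst : (fwdDiff 1)^[t] (fun y ↦ y.choose t : ℕ → ℤ) = fun _ ↦ 1 := by
      simpa using fwdDiff_iter_choose 0 t
    rw [zchoose_of_neg (by omega), show t + r + 1 = r + 1 + t by ring,
      Function.iterate_add_apply, hconst, Function.iterate_succ_apply, fwdDiff_const,
      Function.iterate_fixed (fwdDiff_const 1 (0 : ℤ))]

lemma sum_neg_one_pow_mul_choose_mul_choose (t m k : ℕ) :
    ∑ v ∈ range (m + 1), (-1 : ℤ) ^ (m - v) * m.choose v * (k + v).choose t =
      zchoose k ((t : ℤ) - m) := by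
  rw [← fwdDiff_iter_choose_eq_zchoose, fwdDiff_iter_eq_sum_shift]
  simp only [smul_eq_mul, mul_one]

lemma sum_negOnePow_mul_zchoose_mul_zchoose (t m k n : ℕ) (h : m + k ≤ n) :
    ∑ u ∈ range (n + 1),
        (((u : ℤ) - t).negOnePow : ℤ) * zchoose u t * zchoose m ((u : ℤ) - k) =
      (((m : ℤ) + k - t).negOnePow : ℤ) * zchoose k ((m : ℤ) + k - t) := by
  rw [show n + 1 = k + ((m + 1) + (n - m - k)) by omega, sum_range_add, sum_range_add,
    sum_eq_zero (s := range k) fun u hu ↦ by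
      rw [zchoose_of_neg (b := (u : ℤ) - k) (by simp at hu; omega), mul_zero],
    sum_eq_zero (s := range (n - m - k)) fun v _ ↦ by
      rw [zchoose_of_lt (b := ((k + (m + 1 + v) : ℕ) : ℤ) - k) (by omega), mul_zero],
    zero_add, add_zero, ← zchoose_symm, show (k : ℤ) - (m + k - t) = t - m by ring,
    ← sum_neg_one_pow_mul_choose_mul_choose, mul_sum]
  refine sum_congr rfl fun v hv ↦ ?_
  rw [mem_range] at hv
  have hsign : ((k + v : ℕ) : ℤ) - t = ((m : ℤ) + k - t) - (m - v : ℕ) := by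
    push_cast [Nat.cast_sub (by omega : v ≤ m)]
    ring
  rw [hsign, Int.negOnePow_sub, Units.val_mul, Int.coe_negOnePow_natCast,
    show ((k + v : ℕ) : ℤ) - k = v by push_cast; ring, zchoose_natCast, zchoose_natCast]
  ring

lemma zchoose_mul_zchoose_mul_zchoose_eq_sum (N B d : ℕ) (hBN : B ≤ N) (c : ℤ) :
    zchoose N c * zchoose (N - c) (B - c) * zchoose (N - c) (d - c) =
      zchoose N B * ∑ s ∈ range (d + 1),
        zchoose ((N : ℤ) - B) s * zchoose B ((d : ℤ) - s) * zchoose ((d : ℤ) - s) c := by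
  rcases lt_or_ge c 0 with hc | hc
  · rw [zchoose_of_neg hc, sum_eq_zero fun s _ ↦ by rw [zchoose_of_neg hc, mul_zero]]
    ring
  rcases lt_or_ge (B : ℤ) c with hBc | hcB
  · have hterm (s : ℕ) : zchoose B ((d : ℤ) - s) * zchoose ((d : ℤ) - s) c = 0 := by
      rcases lt_or_ge (B : ℤ) (d - s) with h | h
      · rw [zchoose_of_lt h, zero_mul]
      · rw [zchoose_of_lt (a := (d : ℤ) - s) (by omega), mul_zero]
    rw [zchoose_of_neg (b := (B : ℤ) - c) (by omega),
      sum_eq_zero fun s _ ↦ by rw [mul_assoc, hterm, mul_zero]]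
    ring
  lift c to ℕ using hc
  have hvandermonde := zchoose_add_eq_sum (N - B) (B - c) ((d : ℤ) - c) d (by omega)
  rw [Nat.cast_sub hBN, Nat.cast_sub (by omega), sub_add_sub_cancel] at hvandermonde
  rw [hvandermonde, ← zchoose_mul, mul_assoc, mul_sum]
  congr 1
  refine sum_congr rfl fun s _ ↦ ?_
  have hrevision := zchoose_mul B c ((d : ℤ) - s)
  rw [show (d : ℤ) - s - c = d - c - s by ring] at hrevision
  linear_combination (-zchoose ((N : ℤ) - B) s) * hrevision

theorem stmt_15_general (n k t i j : ℕ) (hki : k ≤ i) (hin : i ≤ n - k)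
    (hkj : k ≤ j) (hjn : j ≤ n - k) :
    zchoose ((n : ℤ) - 2 * k) ((i : ℤ) - k) *
        ∑ s ∈ Finset.range (j - k + 1),
          isign ((j : ℤ) - t - s) * zchoose ((n : ℤ) - k - i) (s : ℤ) *
            zchoose ((i : ℤ) - k) ((j : ℤ) - k - s) * zchoose (k : ℤ) ((j : ℤ) - t - s) =
      ∑ u ∈ Finset.range (n + 1),
        isign ((u : ℤ) - t) * zchoose (u : ℤ) (t : ℤ) *
          zchoose ((n : ℤ) - 2 * k) ((u : ℤ) - k) *
          zchoose ((n : ℤ) - k - u) ((i : ℤ) - u) *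
          zchoose ((n : ℤ) - k - u) ((j : ℤ) - u) := by
  obtain ⟨N, hN⟩ : ∃ N : ℕ, (n : ℤ) - 2 * k = N := ⟨n - 2 * k, by omega⟩
  obtain ⟨B, hB⟩ : ∃ B : ℕ, (i : ℤ) - k = B := ⟨i - k, by omega⟩
  obtain ⟨d, hd, hd'⟩ : ∃ d : ℕ, j - k = d ∧ (j : ℤ) - k = d :=
    ⟨j - k, rfl, by omega⟩
  simp only [isign_eq_negOnePow]
  symm
  calc _ = ∑ u ∈ range (n + 1), (((u : ℤ) - t).negOnePow : ℤ) * zchoose u t *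
          (zchoose N B * ∑ s ∈ range (d + 1), zchoose ((N : ℤ) - B) s *
            zchoose B ((d : ℤ) - s) * zchoose ((d : ℤ) - s) ((u : ℤ) - k)) := by
        refine sum_congr rfl fun u _ ↦ ?_
        rw [← zchoose_mul_zchoose_mul_zchoose_eq_sum N B d (by omega), hN,
          show (n : ℤ) - k - u = N - (u - k) by omega,
          show (i : ℤ) - u = B - (u - k) by omega, show (j : ℤ) - u = d - (u - k) by omega]
        ring
    _ = zchoose N B * ∑ s ∈ range (d + 1),
          zchoose ((N : ℤ) - B) s * zchoose B ((d : ℤ) - s) *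
            ∑ u ∈ range (n + 1), (((u : ℤ) - t).negOnePow : ℤ) * zchoose u t *
              zchoose ((d : ℤ) - s) ((u : ℤ) - k) := by
        simp only [mul_sum]
        rw [sum_comm]
        exact sum_congr rfl fun s _ ↦ sum_congr rfl fun u _ ↦ by ring
    _ = _ := by
        rw [hN, hB, hd, show (n : ℤ) - k - i = N - B by omega, hd']
        congr 1
        refine sum_congr rfl fun s hs ↦ ?_
        rw [mem_range] at hs
        rw [show (d : ℤ) - s = (d - s : ℕ) by omega,
          sum_negOnePow_mul_zchoose_mul_zchoose t (d - s) k n (by omega),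
          show ((d - s : ℕ) : ℤ) + k - t = j - t - s by omega]
        ring

/-- the binomial identity
`C(n-2k, i-k) Σ_{s=0}^{j-k} (-1)^{j-t-s} C(n-k-i, s) C(i-k, j-k-s) C(k, j-t-s)
 = Σ_{u=0}^{n} (-1)^{u-t} C(u,t) C(n-2k, u-k) C(n-k-u, i-u) C(n-k-u, j-u)`,
with the convention `C(a,b) = 0` for `b < 0` or `b > a`. -/
theorem stmt_15 (n k t i j : ℕ) (hk : k ≤ n / 2) (hki : k ≤ i) (hin : i ≤ n - k)
    (hkj : k ≤ j) (hjn : j ≤ n - k) (hti : t ≤ i) (htj : t ≤ j) (hijt : i + j - t ≤ n) :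
    zchoose ((n : ℤ) - 2 * k) ((i : ℤ) - k) *
        ∑ s ∈ Finset.range (j - k + 1),
          isign ((j : ℤ) - t - s) * zchoose ((n : ℤ) - k - i) (s : ℤ) *
            zchoose ((i : ℤ) - k) ((j : ℤ) - k - s) * zchoose (k : ℤ) ((j : ℤ) - t - s) =
      ∑ u ∈ Finset.range (n + 1),
        isign ((u : ℤ) - t) * zchoose (u : ℤ) (t : ℤ) *
          zchoose ((n : ℤ) - 2 * k) ((u : ℤ) - k) *
          zchoose ((n : ℤ) - k - u) ((i : ℤ) - u) *
          zchoose ((n : ℤ) - k - u) ((j : ℤ) - u) :=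
  stmt_15_general n k t i j hki hin hkj hjn
end
end

section
/- Let q ≥ 3 be an integer and let ℬ ⊆ ℂ^{q×q} (rows and columns indexed by {0, 1, …, q−1}) be the set of matrices M with M_{π(a),π(b)} = M_{a,b} for every permutation π of {0,…,q−1} fixing 0 and all a, b. Then ℬ is a subalgebra of ℂ^{q×q} of dimension 5, with basis B_1,…,B_5 determined by: (Σ_i x_i B_i)_{0,0} = x_1, (Σ_i x_i B_i)_{0,b} = x_2 for b ≠ 0, (Σ_i x_i B_i)_{a,0} = x_3 for a ≠ 0, (Σ_i x_i B_i)_{a,a} = x_4 for a ≠ 0, and (Σ_i x_i B_i)_{a,b} = x_5 for distinct nonzero a, b. Moreover, the linear map φ : ℬ → M_2(ℂ) ⊕ M_1(ℂ) given by φ(x_1B_1 + ⋯ + x_5B_5) := [[x_1, x_2√(q−1)], [x_3√(q−1), x_4 + (q−2)x_5]] ⊕ [x_4 − x_5] is a bijective ℂ-algebra homomorphism satisfying φ(M*) = φ(M)*, where * denotes the conjugate transpose. -/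
/-! The stabilizer of `o` acts on pairs of indices with five orbits, represented by `(o, o)`,
`(o, i)`, `(i, o)`, `(i, i)` and `(i, j)` for any two distinct `i, j ≠ o`; so an invariant
matrix is a pattern matrix, determined by its five entries there. In the product of two pattern
matrices the summand of each entry is constant outside the at most three indices `o, a, b`,
which yields the structure constants of the algebra, with their factors `q - 1, q - 2, q - 3`.
The map `φ` respects them because `√(q - 1) ^ 2 = q - 1`, and it has trivial kernel, hence is
bijective since both sides have dimension `5 = 4 + 1`. -/

open scoped Classical
open Matrix

noncomputable section

/-- The five 0/1 matrices `B_1, …, B_5` (indexed here by `Fin 5`) whose linear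
combinations `Σ x_i B_i` are exactly the matrices of the displayed pattern:
entry `(0,0)` is `x_1`; entries `(0,b)`, `b ≠ 0`, are `x_2`; entries `(a,0)`, `a ≠ 0`,
are `x_3`; diagonal entries `(a,a)`, `a ≠ 0`, are `x_4`; and off-diagonal entries
`(a,b)` with `a, b ≠ 0` are `x_5`. -/
def Bq (q : ℕ) (hq : 0 < q) : Fin 5 → Matrix (Fin q) (Fin q) ℂ
  | 0 => Matrix.of fun a b => if a = ⟨0, hq⟩ ∧ b = ⟨0, hq⟩ then 1 else 0
  | 1 => Matrix.of fun a b => if a = ⟨0, hq⟩ ∧ b ≠ ⟨0, hq⟩ then 1 else 0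
  | 2 => Matrix.of fun a b => if a ≠ ⟨0, hq⟩ ∧ b = ⟨0, hq⟩ then 1 else 0
  | 3 => Matrix.of fun a b => if a ≠ ⟨0, hq⟩ ∧ a = b then 1 else 0
  | 4 => Matrix.of fun a b => if a ≠ ⟨0, hq⟩ ∧ b ≠ ⟨0, hq⟩ ∧ a ≠ b then 1 else 0

theorem Equiv.Perm.exists_fix_apply_apply {n : Type*} [DecidableEq n] {o i j a b : n}
    (hoi : o ≠ i) (hoj : o ≠ j) (hij : i ≠ j) (ha : a ≠ o) (hb : b ≠ o) (hab : a ≠ b) :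
    ∃ π : Equiv.Perm n, π o = o ∧ π i = a ∧ π j = b := by
  set σ := Equiv.swap i a
  have hσo : σ o = o := Equiv.swap_apply_of_ne_of_ne hoi ha.symm
  have hσi : σ i = a := Equiv.swap_apply_left i a
  have hσj_a : σ j ≠ a := fun h => hij (σ.injective (hσi.trans h.symm))
  have hσj_o : σ j ≠ o := fun h => hoj (σ.injective (hσo.trans h.symm))
  refine ⟨σ.trans (Equiv.swap (σ j) b), ?_, ?_, Equiv.swap_apply_left _ _⟩
  · simp only [Equiv.trans_apply, hσo]
    exact Equiv.swap_apply_of_ne_of_ne hσj_o.symm hb.symm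
  · simp only [Equiv.trans_apply, hσi]
    exact Equiv.swap_apply_of_ne_of_ne hσj_a.symm hab

theorem Fintype.sum_eq_sum_add_card_compl_mul {R n : Type*} [CommRing R] [Fintype n]
    {s : Finset n} {f : n → R} {d : R} (h : ∀ k ∉ s, f k = d) :
    ∑ k, f k = ∑ k ∈ s, f k + ((Fintype.card n : R) - s.card) * d := by
  rw [← Finset.sum_add_sum_compl s f,
    Finset.sum_congr rfl fun k hk => h k (Finset.mem_compl.1 hk), Finset.sum_const,
    Finset.card_compl, nsmul_eq_mul, Nat.cast_sub (Finset.card_le_univ s)]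

section

variable {R : Type*} [CommRing R] {n : Type*} [DecidableEq n]

def patternMatrix (o : n) (x : Fin 5 → R) : Matrix n n R :=
  of fun a b => if a = o then (if b = o then x 0 else x 1)
    else if b = o then x 2 else if a = b then x 3 else x 4

def patternCoords (o i j : n) : Matrix n n R →ₗ[R] Fin 5 → R where
  toFun M := ![M o o, M o i, M i o, M i i, M i j]
  map_add' M N := by ext k; fin_cases k <;> rfl
  map_smul' c M := by ext k; fin_cases k <;> rfl

def patternMul (c : R) (x y : Fin 5 → R) : Fin 5 → R :=
  ![x 0 * y 0 + (c - 1) * (x 1 * y 2),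
    x 0 * y 1 + x 1 * y 3 + (c - 2) * (x 1 * y 4),
    x 2 * y 0 + x 3 * y 2 + (c - 2) * (x 4 * y 2),
    x 2 * y 1 + x 3 * y 3 + (c - 2) * (x 4 * y 4),
    x 2 * y 1 + x 3 * y 4 + x 4 * y 3 + (c - 3) * (x 4 * y 4)]

theorem patternCoords_patternMatrix {o i j : n} (hoi : o ≠ i) (hoj : o ≠ j) (hij : i ≠ j)
    (x : Fin 5 → R) : patternCoords o i j (patternMatrix o x) = x := by
  ext k; fin_cases k <;> simp [patternCoords, patternMatrix, hoi.symm, hoj.symm, hij]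

theorem patternCoords_one {o i j : n} (hoi : o ≠ i) (hij : i ≠ j) :
    patternCoords o i j (1 : Matrix n n R) = ![1, 0, 0, 1, 0] := by
  ext k; fin_cases k <;> simp [patternCoords, one_apply, hoi, hoi.symm, hij]

theorem conjTranspose_patternMatrix [StarRing R] (o : n) (x : Fin 5 → R) :
    (patternMatrix o x)ᴴ =
      patternMatrix o ![star (x 0), star (x 2), star (x 1), star (x 3), star (x 4)] := by
  ext a b
  simp only [patternMatrix, conjTranspose_apply, of_apply, eq_comm (a := b) (b := a)]
  split_ifs <;> rfl

variable [Fintype n]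

def permInvariantSubalgebra (R : Type*) [CommRing R] (G : Subgroup (Equiv.Perm n)) :
    Subalgebra R (Matrix n n R) where
  carrier := {M | ∀ π ∈ G, ∀ a b, M (π a) (π b) = M a b}
  mul_mem' {M N} hM hN π hπ a b := by
    rw [mul_apply, mul_apply, ← Equiv.sum_comp π]
    simp only [hM π hπ, hN π hπ]
  add_mem' hM hN π hπ a b := by simp only [Matrix.add_apply, hM π hπ, hN π hπ]
  algebraMap_mem' r π _ a b := by
    simp only [algebraMap_matrix_apply, π.injective.eq_iff]

theorem patternMatrix_mem (o : n) (x : Fin 5 → R) :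
    patternMatrix o x ∈ permInvariantSubalgebra R (MulAction.stabilizer (Equiv.Perm n) o) := by
  intro π (hπ : π o = o) a b
  have hπo : ∀ c, π c = o ↔ c = o := fun c => by rw [← hπ, π.injective.eq_iff, hπ]
  simp only [patternMatrix, of_apply, hπo, π.injective.eq_iff]

theorem patternMatrix_patternCoords {o i j : n} (hoi : o ≠ i) (hoj : o ≠ j) (hij : i ≠ j)
    {M : Matrix n n R}
    (hM : M ∈ permInvariantSubalgebra R (MulAction.stabilizer (Equiv.Perm n) o)) :
    patternMatrix o (patternCoords o i j M) = M := by
  have hM' : ∀ π : Equiv.Perm n, π o = o → ∀ a b, M (π a) (π b) = M a b := hM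
  ext a b
  simp only [patternMatrix, patternCoords, LinearMap.coe_mk, AddHom.coe_mk, of_apply]
  by_cases ha : a = o <;> by_cases hb : b = o
  · simp [ha, hb]
  · have h := hM' (Equiv.swap i b) (Equiv.swap_apply_of_ne_of_ne hoi (Ne.symm hb)) o i
    simp_all [Equiv.swap_apply_of_ne_of_ne hoi (Ne.symm hb)]
  · have h := hM' (Equiv.swap i a) (Equiv.swap_apply_of_ne_of_ne hoi (Ne.symm ha)) i o
    simp_all [Equiv.swap_apply_of_ne_of_ne hoi (Ne.symm ha)]
  · by_cases hab : a = b
    · have h := hM' (Equiv.swap i a) (Equiv.swap_apply_of_ne_of_ne hoi (Ne.symm ha)) i i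
      simp_all
    · obtain ⟨π, hπo, hπi, hπj⟩ := Equiv.Perm.exists_fix_apply_apply hoi hoj hij ha hb hab
      have h := hM' π hπo i j
      simp_all

theorem patternMatrix_mul_apply (o : n) (x y : Fin 5 → R) {s : Finset n} {a b : n}
    (ho : o ∈ s) (ha : a ∈ s) (hb : b ∈ s) :
    (patternMatrix o x * patternMatrix o y) a b =
      ∑ k ∈ s, patternMatrix o x a k * patternMatrix o y k b
        + ((Fintype.card n : R) - s.card) *
          ((if a = o then x 1 else x 4) * (if b = o then y 2 else y 4)) := by
  refine Fintype.sum_eq_sum_add_card_compl_mul fun k hk => ?_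
  have hko : k ≠ o := fun h => hk (h ▸ ho)
  have hka : a ≠ k := fun h => hk (h ▸ ha)
  have hkb : k ≠ b := fun h => hk (h ▸ hb)
  simp [patternMatrix, hko, hka, hkb]

theorem patternCoords_patternMatrix_mul {o i j : n} (hoi : o ≠ i) (hoj : o ≠ j) (hij : i ≠ j)
    (x y : Fin 5 → R) :
    patternCoords o i j (patternMatrix o x * patternMatrix o y) =
      patternMul (Fintype.card n : R) x y := by
  have hs : ({o, i, j} : Finset n).card = 3 := by
    simp [Finset.card_insert_of_notMem, hoi, hoj, hij]
  ext k
  fin_cases k <;>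
  · simp only [patternCoords, LinearMap.coe_mk, AddHom.coe_mk, Fin.zero_eta, Fin.mk_one,
      Fin.reduceFinMk, Matrix.cons_val]
    rw [patternMatrix_mul_apply o x y (s := {o, i, j}) (by simp) (by simp) (by simp)]
    simp [hs, patternMatrix, patternMul, Finset.sum_insert, hoi, hoj, hij, hoi.symm, hoj.symm,
      hij.symm]
    ring

theorem bijOn_patternCoords {o i j : n} (hoi : o ≠ i) (hoj : o ≠ j) (hij : i ≠ j) :
    Set.BijOn (patternCoords o i j)
      (permInvariantSubalgebra R (MulAction.stabilizer (Equiv.Perm n) o) : Set (Matrix n n R))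
      Set.univ :=
  ⟨Set.mapsTo_univ _ _,
    fun M hM N hN h => by
      rw [← patternMatrix_patternCoords hoi hoj hij hM, h,
        patternMatrix_patternCoords hoi hoj hij hN],
    fun x _ => ⟨_, patternMatrix_mem o x, patternCoords_patternMatrix hoi hoj hij x⟩⟩

def permInvariantCoordsEquiv {o i j : n} (hoi : o ≠ i) (hoj : o ≠ j) (hij : i ≠ j) :
    permInvariantSubalgebra R (MulAction.stabilizer (Equiv.Perm n) o) ≃ₗ[R] (Fin 5 → R) where
  __ := (patternCoords o i j).comp (Subalgebra.val _).toLinearMap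
  invFun x := ⟨patternMatrix o x, patternMatrix_mem o x⟩
  left_inv M := Subtype.ext (patternMatrix_patternCoords hoi hoj hij M.2)
  right_inv x := patternCoords_patternMatrix hoi hoj hij x

end

section

variable {R : Type*} [CommRing R]

def blockRep (c s : R) :
    (Fin 5 → R) →ₗ[R] Matrix (Fin 2) (Fin 2) R × Matrix (Fin 1) (Fin 1) R where
  toFun x := (!![x 0, x 1 * s; x 2 * s, x 3 + (c - 2) * x 4], !![x 3 - x 4])
  map_add' x y := by
    ext i j <;> fin_cases i <;> fin_cases j <;> simp <;> ring
  map_smul' a x := by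
    ext i j <;> fin_cases i <;> fin_cases j <;> simp <;> ring

theorem blockRep_one (c s : R) : blockRep c s ![1, 0, 0, 1, 0] = 1 := by
  ext i j <;> fin_cases i <;> fin_cases j <;> simp [blockRep]

theorem blockRep_patternMul {c s : R} (hs : s * s = c - 1) (x y : Fin 5 → R) :
    blockRep c s (patternMul c x y) = blockRep c s x * blockRep c s y := by
  obtain rfl : c = s * s + 1 := by rw [hs]; ring
  ext i j <;> fin_cases i <;> fin_cases j <;> simp [blockRep, patternMul] <;> ring

theorem blockRep_star [StarRing R] {c s : R} (hc : star c = c) (hs : star s = s)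
    (x : Fin 5 → R) :
    blockRep c s ![star (x 0), star (x 2), star (x 1), star (x 3), star (x 4)] =
      ((blockRep c s x).1ᴴ, (blockRep c s x).2ᴴ) := by
  ext i j <;> fin_cases i <;> fin_cases j <;> simp [blockRep, hc, hs]

variable {n : Type*} [Fintype n] [DecidableEq n] {o i j : n}

theorem blockRep_patternCoords_mul (hoi : o ≠ i) (hoj : o ≠ j) (hij : i ≠ j) {s : R}
    (hs : s * s = Fintype.card n - 1) {M N : Matrix n n R}
    (hM : M ∈ permInvariantSubalgebra R (MulAction.stabilizer (Equiv.Perm n) o))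
    (hN : N ∈ permInvariantSubalgebra R (MulAction.stabilizer (Equiv.Perm n) o)) :
    blockRep (Fintype.card n : R) s (patternCoords o i j (M * N)) =
      blockRep (Fintype.card n : R) s (patternCoords o i j M) *
        blockRep (Fintype.card n : R) s (patternCoords o i j N) := by
  obtain ⟨x, rfl⟩ : ∃ x, patternMatrix o x = M :=
    ⟨_, patternMatrix_patternCoords hoi hoj hij hM⟩
  obtain ⟨y, rfl⟩ : ∃ y, patternMatrix o y = N :=
    ⟨_, patternMatrix_patternCoords hoi hoj hij hN⟩
  rw [patternCoords_patternMatrix_mul hoi hoj hij, patternCoords_patternMatrix hoi hoj hij,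
    patternCoords_patternMatrix hoi hoj hij, blockRep_patternMul hs]

theorem blockRep_patternCoords_conjTranspose [StarRing R] (hoi : o ≠ i) (hoj : o ≠ j)
    (hij : i ≠ j) {s : R} (hs : star s = s) {M : Matrix n n R}
    (hM : M ∈ permInvariantSubalgebra R (MulAction.stabilizer (Equiv.Perm n) o)) :
    blockRep (Fintype.card n : R) s (patternCoords o i j Mᴴ) =
      ((blockRep (Fintype.card n : R) s (patternCoords o i j M)).1ᴴ,
        (blockRep (Fintype.card n : R) s (patternCoords o i j M)).2ᴴ) := by
  obtain ⟨x, rfl⟩ : ∃ x, patternMatrix o x = M :=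
    ⟨_, patternMatrix_patternCoords hoi hoj hij hM⟩
  rw [conjTranspose_patternMatrix, patternCoords_patternMatrix hoi hoj hij,
    patternCoords_patternMatrix hoi hoj hij, blockRep_star (star_natCast _) hs]

end

theorem blockRep_bijective {K : Type*} [Field K] {c s : K} (hs : s ≠ 0) (hc : c ≠ 1) :
    Function.Bijective (blockRep c s) := by
  have hinj : Function.Injective (blockRep c s) := by
    refine (injective_iff_map_eq_zero _).2 fun x hx => ?_
    have entry := fun i j => congrFun (congrFun (congrArg Prod.fst hx) i) j
    have h0 : x 0 = 0 := entry 0 0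
    have h1 : x 1 = 0 := (mul_eq_zero.1 (entry 0 1)).resolve_right hs
    have h2 : x 2 = 0 := (mul_eq_zero.1 (entry 1 0)).resolve_right hs
    have h34 : x 3 + (c - 2) * x 4 = 0 := entry 1 1
    have h3_4 : x 3 - x 4 = 0 := congrFun (congrFun (congrArg Prod.snd hx) 0) 0
    have h4 : x 4 = 0 := (mul_eq_zero.1 (by linear_combination h34 - h3_4 :
      (c - 1) * x 4 = 0)).resolve_left (sub_ne_zero.2 hc)
    have h3 : x 3 = 0 := by linear_combination h3_4 + h4
    ext k; fin_cases k <;> assumption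
  refine ⟨hinj, (LinearMap.injective_iff_surjective_of_finrank_eq_finrank ?_).1 hinj⟩
  simp [Module.finrank_prod, Module.finrank_matrix]

theorem sum_smul_Bq {q : ℕ} (hq : 0 < q) (x : Fin 5 → ℂ) :
    ∑ i, x i • Bq q hq i = patternMatrix ⟨0, hq⟩ x := by
  ext a b
  simp only [Fin.sum_univ_five, Matrix.sum_apply, Matrix.smul_apply, Bq,
    patternMatrix, of_apply, smul_eq_mul]
  split_ifs <;> simp_all

theorem Bq_eq_patternMatrix {q : ℕ} (hq : 0 < q) (i : Fin 5) :
    Bq q hq i = patternMatrix ⟨0, hq⟩ (Pi.single i 1) := by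
  rw [← sum_smul_Bq]
  simp [Pi.single_apply, ite_smul]

/-- for `q ≥ 3`, the set `ℬ` of matrices invariant under all simultaneous
row/column permutations fixing `0` is a subalgebra of `ℂ^{q×q}` of dimension `5` with
basis `B_1, …, B_5`, and `φ(x_1B_1 + ⋯ + x_5B_5) = [[x_1, x_2√(q-1)], [x_3√(q-1),
x_4+(q-2)x_5]] ⊕ [x_4 - x_5]` is a bijective ℂ-algebra `∗`-homomorphism
`ℬ → M_2(ℂ) ⊕ M_1(ℂ)`. -/
theorem stmt_17 (q : ℕ) (hq : 3 ≤ q) :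
    ∃ BB : Subalgebra ℂ (Matrix (Fin q) (Fin q) ℂ),
      (BB : Set (Matrix (Fin q) (Fin q) ℂ)) =
        {M | ∀ π : Equiv.Perm (Fin q), π ⟨0, by omega⟩ = ⟨0, by omega⟩ →
          ∀ a b, M (π a) (π b) = M a b} ∧
      Module.finrank ℂ BB = 5 ∧
      (∃ bas : Module.Basis (Fin 5) ℂ BB,
        ∀ i, (bas i : Matrix (Fin q) (Fin q) ℂ) = Bq q (by omega) i) ∧
      ∃ φ : Matrix (Fin q) (Fin q) ℂ → Matrix (Fin 2) (Fin 2) ℂ × Matrix (Fin 1) (Fin 1) ℂ,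
        IsLinearMap ℂ φ ∧
        (∀ x : Fin 5 → ℂ,
          φ (∑ i, x i • Bq q (by omega) i) =
            (!![x 0, x 1 * ((Real.sqrt ((q : ℝ) - 1) : ℝ) : ℂ);
                x 2 * ((Real.sqrt ((q : ℝ) - 1) : ℝ) : ℂ), x 3 + ((q : ℂ) - 2) * x 4],
             !![x 3 - x 4])) ∧
        Set.BijOn φ (BB : Set (Matrix (Fin q) (Fin q) ℂ)) Set.univ ∧
        φ 1 = 1 ∧
        (∀ M N, M ∈ BB → N ∈ BB → φ (M * N) = ((φ M).1 * (φ N).1, (φ M).2 * (φ N).2)) ∧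
        (∀ M ∈ BB, φ Mᴴ = ((φ M).1ᴴ, (φ M).2ᴴ)) := by
  have hq0 : 0 < q := by omega
  set o : Fin q := ⟨0, hq0⟩
  set i : Fin q := ⟨1, by omega⟩
  set j : Fin q := ⟨2, by omega⟩
  have hoi : o ≠ i := by simp [o, i, Fin.ext_iff]
  have hoj : o ≠ j := by simp [o, j, Fin.ext_iff]
  have hij : i ≠ j := by simp [i, j, Fin.ext_iff]
  set s : ℂ := ((Real.sqrt ((q : ℝ) - 1) : ℝ) : ℂ)
  have hq1 : (1 : ℝ) < q := by exact_mod_cast (by omega : 1 < q)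
  have hss : s * s = q - 1 := by
    rw [← Complex.ofReal_mul, Real.mul_self_sqrt (by linarith)]; push_cast; ring
  have hs : s ≠ 0 := Complex.ofReal_ne_zero.2 (Real.sqrt_ne_zero'.2 (by linarith))
  have hc : (q : ℂ) ≠ 1 := by exact_mod_cast hq1.ne'
  let e := permInvariantCoordsEquiv (R := ℂ) hoi hoj hij
  refine ⟨permInvariantSubalgebra ℂ (MulAction.stabilizer (Equiv.Perm (Fin q)) o), rfl,
    e.finrank_eq.trans (Module.finrank_fin_fun ℂ),
    ⟨.ofEquivFun e, fun k => by rw [Module.Basis.coe_ofEquivFun, Bq_eq_patternMatrix]; rfl⟩,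
    blockRep (q : ℂ) s ∘ₗ patternCoords o i j, LinearMap.isLinear _, fun x => ?_,
    (blockRep_bijective hs hc).bijOn_univ.comp (bijOn_patternCoords hoi hoj hij),
    by simp [patternCoords_one hoi hij, blockRep_one], fun M N hM hN => ?_, fun M hM => ?_⟩
  · rw [LinearMap.coe_comp, Function.comp_apply, sum_smul_Bq hq0]
    exact congrArg (blockRep _ s) (patternCoords_patternMatrix hoi hoj hij x)
  · simpa [Prod.mul_def] using blockRep_patternCoords_mul hoi hoj hij (by simpa using hss) hM hN
  · simpa using blockRep_patternCoords_conjTranspose hoi hoj hij (Complex.conj_ofReal _) hM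
end
end
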